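/- arXiv:2509.16755 — 6 statements merged into one kernel-verified Lean document; each statement's English description precedes it below -/
import Mathlib

section
/- Let (f_α)_{α<κ⁺} be a disjointing weak scale of length κ⁺ in ∏_n λ_n, and let L = {f_α : α < κ⁺} ordered by the lexicographic ordering <_lex. Then L has a weakly dense subset of cardinality κ, L is not σ-scattered, and every subordering of L of cardinality at most κ is σ-wellordered. -/
open Cardinal Set

universe u v

noncomputable section

/-- Eventual domination: `f n < g n` for all but finitely many `n`. -/
def EvLT (f g : ℕ → Ordinal.{u}) : Prop := {n | ¬ f n < g n}.Finite

/-- `C` is a club (closed and unbounded) subset of the ordinal `α`: every member of `C`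
is below `α`, `C` is unbounded in `α`, and `C` is closed under suprema of its nonempty
subsets whose supremum is below `α`. -/
def IsClubIn (C : Set Ordinal.{u}) (α : Ordinal.{u}) : Prop :=
  (∀ β ∈ C, β < α) ∧ (∀ β < α, ∃ γ ∈ C, β ≤ γ) ∧
    (∀ Y ⊆ C, Y.Nonempty → sSup Y < α → sSup Y ∈ C)

/-- The set of limit points of a set `C` of ordinals: those `β > 0` with `sup (C ∩ β) = β`. -/
def limPts (C : Set Ordinal.{u}) : Set Ordinal.{u} :=
  {β | 0 < β ∧ sSup (C ∩ Set.Iio β) = β}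

/-- `f` (restricted to the ordinals below `μ`) is a scale of length `μ` in `∏ n, κn n`:
pointwise below the `κn n`, increasing and cofinal under eventual domination. -/
def IsScale (κn : ℕ → Cardinal.{u}) (μ : Ordinal.{u}) (f : Ordinal.{u} → ℕ → Ordinal.{u}) :
    Prop :=
  (∀ α < μ, ∀ n, f α n < (κn n).ord) ∧
  (∀ α β, α < β → β < μ → EvLT (f α) (f β)) ∧
  (∀ h : ℕ → Ordinal.{u}, (∀ n, h n < (κn n).ord) → ∃ α < μ, EvLT h (f α))

/-- `f` (restricted to the ordinals below `μ`) is a weak scale of length `μ` in `∏ n, lam n`: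
functions `ω → κ` which are `<*`-increasing, eventually below the `lam n`, and cofinal in
`∏ n, lam n` under eventual domination. -/
def IsWeakScale (κ : Cardinal.{u}) (lam : ℕ → Ordinal.{u}) (μ : Ordinal.{u})
    (f : Ordinal.{u} → ℕ → Ordinal.{u}) : Prop :=
  (∀ α < μ, ∀ n, f α n < κ.ord) ∧
  (∀ α β, α < β → β < μ → EvLT (f α) (f β)) ∧
  (∀ α < μ, {n | ¬ f α n < lam n}.Finite) ∧
  (∀ h : ℕ → Ordinal.{u}, (∀ n, h n < lam n) → ∃ α < μ, EvLT h (f α))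

/-- The (weak) scale `f` of length `μ` is disjointing: for every `β < μ` there are natural
numbers `N α` for `α < β` such that `f α n < f α' n` whenever `α < α' < β` and
`n ≥ max (N α) (N α')`. -/
def IsDisjointing (μ : Ordinal.{u}) (f : Ordinal.{u} → ℕ → Ordinal.{u}) : Prop :=
  ∀ β < μ, ∃ N : Ordinal.{u} → ℕ,
    ∀ α α', α < α' → α' < β → ∀ n, N α ≤ n → N α' ≤ n → f α n < f α' n

/-- `s` is a scattered subset of the linear order `L`: `ℚ` does not embed into `s`. -/
def IsScatteredSet {L : Type*} [LinearOrder L] (s : Set L) : Prop :=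
  ¬ ∃ f : ℚ → L, StrictMono f ∧ ∀ q, f q ∈ s

/-- `A` is σ-scattered: a union of countably many scattered subsets. -/
def IsSigmaScatteredSet {L : Type*} [LinearOrder L] (A : Set L) : Prop :=
  ∃ S : ℕ → Set L, (⋃ n, S n) = A ∧ ∀ n, IsScatteredSet (S n)

/-- `A` is σ-wellordered: a union of countably many subsets, each wellordered by the
ordering of `L` (i.e. every nonempty subset has a least element). -/
def IsSigmaWellOrderedSet {L : Type*} [LinearOrder L] (A : Set L) : Prop :=
  ∃ S : ℕ → Set L, (⋃ n, S n) = A ∧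
    ∀ n, ∀ T ⊆ S n, T.Nonempty → ∃ a ∈ T, ∀ b ∈ T, a ≤ b

/-- `D` is weakly dense in `A`: for all `a < c` in `A` there is `b ∈ D` with `a ≤ b ≤ c`. -/
def WeaklyDenseIn {L : Type*} [LinearOrder L] (D A : Set L) : Prop :=
  ∀ a ∈ A, ∀ c ∈ A, a < c → ∃ b ∈ D, a ≤ b ∧ b ≤ c

section AuxLemmas

def dyv (s : List Bool) : ℕ → Bool := fun n =>
  if n < s.length then s.getD n false else decide (n = s.length)

theorem dyv_lt (s : List Bool) {n : ℕ} (h : n < s.length) : dyv s n = s.getD n false :=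
  if_pos h

theorem dyv_len (s : List Bool) : dyv s s.length = true := by simp [dyv]

theorem dyv_gt (s : List Bool) {n : ℕ} (h : s.length < n) : dyv s n = false := by
  have h1 : ¬ n < s.length := by omega
  have h2 : ¬ n = s.length := by omega
  simp [dyv, h1, h2]

theorem dyv_append_lt (s : List Bool) (a : Bool) {n : ℕ} (h : n < s.length) :
    dyv (s ++ [a]) n = dyv s n := by
  rw [dyv_lt _ (by simp; omega), dyv_lt _ h, List.getD_append _ _ _ _ h]

theorem dyv_append_len (s : List Bool) (a : Bool) : dyv (s ++ [a]) s.length = a := by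
  rw [dyv_lt _ (by simp), List.getD_append_right _ _ _ _ le_rfl]
  simp

theorem dyv_append_succ (s : List Bool) (a : Bool) : dyv (s ++ [a]) (s.length + 1) = true := by
  have : (s ++ [a]).length = s.length + 1 := by simp
  rw [← this, dyv_len]

/-- the "dyadic string" strict order -/
def dlt (s t : List Bool) : Prop := toLex (dyv s) < toLex (dyv t)

theorem dlt_def (s t : List Bool) :
    dlt s t ↔ ∃ i, (∀ j < i, dyv s j = dyv t j) ∧ dyv s i = false ∧ dyv t i = true := by
  constructor
  · rintro ⟨i, hag, hlt⟩
    exact ⟨i, hag, Bool.lt_iff.1 (show dyv s i < dyv t i from hlt)⟩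
  · rintro ⟨i, hag, h1, h2⟩
    exact ⟨i, hag, by show dyv s i < dyv t i; rw [h1, h2]; exact Bool.false_lt_true⟩

theorem dlt_dense {s t : List Bool} (h : dlt s t) : ∃ u, dlt s u ∧ dlt u t := by
  obtain ⟨i, hag, h1, h2⟩ := (dlt_def s t).1 h
  have hit : i ≤ t.length := by
    by_contra hc
    rw [dyv_gt t (by omega)] at h2; exact Bool.noConfusion h2
  have his : i ≠ s.length := by
    intro hc; rw [hc, dyv_len] at h1; exact Bool.noConfusion h1
  rcases Nat.lt_or_ge i t.length with h3 | h3
  · -- u = t ++ [false]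
    refine ⟨t ++ [false], (dlt_def _ _).2 ⟨i, ?_, ?_, ?_⟩, (dlt_def _ _).2 ⟨t.length, ?_, ?_, ?_⟩⟩
    · intro j hj; rw [dyv_append_lt _ _ (by omega)]; exact hag j hj
    · exact h1
    · rw [dyv_append_lt _ _ h3]; exact h2
    · intro j hj; rw [dyv_append_lt _ _ hj]
    · rw [dyv_append_len]
    · exact dyv_len t
  · have h3 : i = t.length := by omega
    rcases Nat.lt_or_ge i s.length with h4 | h4
    · -- u = s ++ [true]
      refine ⟨s ++ [true], (dlt_def _ _).2 ⟨s.length + 1, ?_, ?_, ?_⟩,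
        (dlt_def _ _).2 ⟨i, ?_, ?_, ?_⟩⟩
      · intro j hj
        rcases Nat.lt_or_ge j s.length with h5 | h5
        · rw [dyv_append_lt _ _ h5]
        · have h6 : j = s.length := by omega
          rw [h6, dyv_append_len, dyv_len]
      · exact dyv_gt s (by omega)
      · exact dyv_append_succ s true
      · intro j hj; rw [dyv_append_lt _ _ (by omega)]; exact hag j hj
      · rw [dyv_append_lt _ _ h4]; exact h1
      · exact h2
    · have h4 : s.length < i := by omega
      -- u = t ++ [false]
      refine ⟨t ++ [false], (dlt_def _ _).2 ⟨t.length + 1, ?_, ?_, ?_⟩,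
        (dlt_def _ _).2 ⟨t.length, ?_, ?_, ?_⟩⟩
      · intro j hj
        rcases Nat.lt_or_ge j t.length with h5 | h5
        · rw [dyv_append_lt _ _ h5]; exact hag j (by omega)
        · have h6 : j = t.length := by omega
          rw [h6, dyv_append_len, dyv_gt s (by omega)]
      · exact dyv_gt s (by omega)
      · exact dyv_append_succ t false
      · intro j hj; rw [dyv_append_lt _ _ hj]
      · rw [dyv_append_len]
      · exact dyv_len t


theorem dyv_cons (b : Bool) (s : List Bool) : dyv (b :: s) 0 = b := by simp [dyv]
theorem dyv_cons_succ (b : Bool) (s : List Bool) (n : ℕ) : dyv (b :: s) (n + 1) = dyv s n := by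
  simp only [dyv, List.length_cons]
  by_cases h : n < s.length
  · rw [if_pos (by omega), if_pos h, List.getD_cons_succ]
  · rw [if_neg (by omega), if_neg h]
    simp only [decide_eq_decide]
    omega
theorem dyv_nil (n : ℕ) : dyv [] n = decide (n = 0) := by simp [dyv]



theorem dlt_nontriv : toLex (dyv [false]) < toLex (dyv []) := by
  refine ⟨0, fun j hj => absurd hj (Nat.not_lt_zero j), ?_⟩
  show dyv [false] 0 < dyv [] 0
  rw [dyv_cons, dyv_nil]; exact Bool.false_lt_true

theorem dlt_nil_cons {c : Bool} {t : List Bool} (h : toLex (dyv []) < toLex (dyv (c :: t))) :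
    c = true := by
  obtain ⟨i, hag, hlt⟩ := h
  have hlt : dyv [] i < dyv (c :: t) i := hlt
  match i with
  | 0 =>
    rw [dyv_nil, dyv_cons] at hlt
    exact absurd hlt (by simp)
  | (k+1) =>
    have h2 : dyv [] 0 = dyv (c :: t) 0 := hag 0 (Nat.succ_pos k)
    rw [dyv_nil, dyv_cons] at h2
    simpa using h2.symm

theorem dlt_cons_nil {b : Bool} {s : List Bool} (h : toLex (dyv (b :: s)) < toLex (dyv [])) :
    b = false := by
  obtain ⟨i, hag, hlt⟩ := h
  have hlt : dyv (b :: s) i < dyv [] i := hlt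
  match i with
  | 0 =>
    rw [dyv_nil, dyv_cons] at hlt
    exact (Bool.lt_iff.1 hlt).1
  | (k+1) =>
    rw [dyv_nil] at hlt
    simp [Bool.lt_iff] at hlt

theorem dlt_cons_cases {b c : Bool} {s t : List Bool}
    (h : toLex (dyv (b :: s)) < toLex (dyv (c :: t))) :
    (b = false ∧ c = true) ∨ (b = c ∧ toLex (dyv s) < toLex (dyv t)) := by
  obtain ⟨i, hag, hlt⟩ := h
  have hlt : dyv (b :: s) i < dyv (c :: t) i := hlt
  match i with
  | 0 =>
    rw [dyv_cons, dyv_cons] at hlt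
    exact Or.inl (Bool.lt_iff.1 hlt)
  | (k+1) =>
    have hb : b = c := by
      have h2 : dyv (b :: s) 0 = dyv (c :: t) 0 := hag 0 (Nat.succ_pos k)
      rwa [dyv_cons, dyv_cons] at h2
    refine Or.inr ⟨hb, ⟨k, fun j hj => ?_, ?_⟩⟩
    · have h2 : dyv (b :: s) (j + 1) = dyv (c :: t) (j + 1) := hag (j+1) (by omega)
      rwa [dyv_cons_succ, dyv_cons_succ] at h2
    · show dyv s k < dyv t k
      rwa [dyv_cons_succ, dyv_cons_succ] at hlt


def DyadicSub : Type := {x : Lex (ℕ → Bool) // ∃ s, toLex (dyv s) = x}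

instance : LinearOrder DyadicSub := Subtype.instLinearOrder _

instance : Countable DyadicSub := by
  have hs : Function.Surjective (fun s : List Bool => (⟨toLex (dyv s), s, rfl⟩ : DyadicSub)) := by
    rintro ⟨x, s, rfl⟩; exact ⟨s, rfl⟩
  exact hs.countable

instance : DenselyOrdered DyadicSub := by
  constructor
  rintro ⟨x, s, rfl⟩ ⟨y, t, rfl⟩ h
  obtain ⟨u, h1, h2⟩ := dlt_dense (Subtype.mk_lt_mk.1 h)
  exact ⟨⟨toLex (dyv u), u, rfl⟩, Subtype.mk_lt_mk.2 h1, Subtype.mk_lt_mk.2 h2⟩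

instance : Nontrivial DyadicSub :=
  ⟨⟨toLex (dyv [false]), _, rfl⟩, ⟨toLex (dyv []), _, rfl⟩, by
    intro h
    exact absurd (congrArg Subtype.val h) (ne_of_lt dlt_nontriv)⟩

theorem exists_rat_emb : ∃ E : ℚ → List Bool,
    ∀ q q', q < q' → toLex (dyv (E q)) < toLex (dyv (E q')) := by
  obtain ⟨e⟩ := Order.embedding_from_countable_to_dense ℚ DyadicSub
  refine ⟨fun q => (e q).2.choose, fun q q' h => ?_⟩
  have h1 : e q < e q' := e.lt_iff_lt.2 h
  rw [(e q).2.choose_spec, (e q').2.choose_spec]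
  exact Subtype.mk_lt_mk.1 (by exact h1)


theorem olex_lt_of (x y : Lex (ℕ → Ordinal.{u})) (i : ℕ)
    (hag : ∀ j < i, ofLex x j = ofLex y j) (hlt : ofLex x i < ofLex y i) : x < y :=
  ⟨i, hag, hlt⟩

theorem olex_lt_dest {x y : Lex (ℕ → Ordinal.{u})} (h : x < y) :
    ∃ i, (∀ j < i, ofLex x j = ofLex y j) ∧ ofLex x i < ofLex y i := h

section Split

variable {κ : Cardinal.{u}} {L : Set (Lex (ℕ → Ordinal.{u}))}

/-- A subset of `Lex (ℕ → Ordinal)` is big if it has more than `κ` elements. -/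
def BigSet (κ : Cardinal.{u}) (S : Set (Lex (ℕ → Ordinal.{u}))) : Prop :=
  ¬ #S ≤ Cardinal.lift.{u+1} κ

/-- The class of elements of `S` extending the finite prefix `l`. -/
def cls (S : Set (Lex (ℕ → Ordinal.{u}))) (l : List Ordinal.{u}) :
    Set (Lex (ℕ → Ordinal.{u})) :=
  {x ∈ S | ∀ j < l.length, ofLex x j = l.getD j 0}

theorem cls_nil (S : Set (Lex (ℕ → Ordinal.{u}))) : cls S [] = S := by
  simp [cls]

theorem cls_subset (S : Set (Lex (ℕ → Ordinal.{u}))) (l : List Ordinal.{u}) :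
    cls S l ⊆ S := fun _ h => h.1

theorem mem_cls_append {S : Set (Lex (ℕ → Ordinal.{u}))} {l : List Ordinal.{u}}
    {ξ : Ordinal.{u}} {x : Lex (ℕ → Ordinal.{u})} (hx : x ∈ cls S l)
    (hv : ofLex x l.length = ξ) : x ∈ cls S (l ++ [ξ]) := by
  refine ⟨hx.1, fun j hj => ?_⟩
  simp only [List.length_append, List.length_cons, List.length_nil] at hj
  rcases Nat.lt_or_ge j l.length with h1 | h1
  · rw [List.getD_append _ _ _ _ h1]; exact hx.2 j h1
  · have h2 : j = l.length := by omega
    subst h2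
    rw [List.getD_append_right _ _ _ _ le_rfl]
    simpa using hv

theorem cls_append_subset (S : Set (Lex (ℕ → Ordinal.{u}))) (l : List Ordinal.{u})
    (ξ : Ordinal.{u}) : cls S (l ++ [ξ]) ⊆ cls S l := by
  rintro x ⟨h1, h2⟩
  refine ⟨h1, fun j hj => ?_⟩
  have := h2 j (by simp; omega)
  rwa [List.getD_append _ _ _ _ hj] at this

theorem cls_append_val {S : Set (Lex (ℕ → Ordinal.{u}))} {l : List Ordinal.{u}}
    {ξ : Ordinal.{u}} {x : Lex (ℕ → Ordinal.{u})} (h : x ∈ cls S (l ++ [ξ])) :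
    ofLex x l.length = ξ := by
  have := h.2 l.length (by simp)
  rwa [List.getD_append_right _ _ _ _ le_rfl, Nat.sub_self, List.getD_cons_zero] at this

theorem cls_sep {S : Set (Lex (ℕ → Ordinal.{u}))} {l : List Ordinal.{u}}
    {ξ ξ' : Ordinal.{u}} (hlt : ξ < ξ') {x y : Lex (ℕ → Ordinal.{u})}
    (hx : x ∈ cls S (l ++ [ξ])) (hy : y ∈ cls S (l ++ [ξ'])) : x < y := by
  refine olex_lt_of x y l.length (fun j hj => ?_) ?_
  · rw [(cls_append_subset S l ξ hx).2 j hj, (cls_append_subset S l ξ' hy).2 j hj]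
  · rw [cls_append_val hx, cls_append_val hy]; exact hlt

theorem clsSmallBiUnion (hκ : ℵ₀ < κ) (E : Set Ordinal.{u}) (hE : E ⊆ Iio κ.ord)
    (A : Ordinal.{u} → Set (Lex (ℕ → Ordinal.{u})))
    (hA : ∀ ξ ∈ E, #(A ξ) ≤ Cardinal.lift.{u+1} κ) :
    #(⋃ ξ ∈ E, A ξ) ≤ Cardinal.lift.{u+1} κ := by
  rcases isEmpty_or_nonempty (↥E) with hne | hne
  · have : (⋃ ξ ∈ E, A ξ) = ∅ := by
      apply Set.eq_empty_of_forall_notMem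
      intro x hx
      simp only [Set.mem_iUnion] at hx
      obtain ⟨ξ, hξ, _⟩ := hx
      exact hne.elim' ⟨ξ, hξ⟩
    rw [this]
    simp
  have h1 : #(⋃ ξ ∈ E, A ξ) ≤ #E * ⨆ ξ : E, #(A ξ.1) := mk_biUnion_le A E
  have h2 : #E ≤ Cardinal.lift.{u+1} κ := by
    calc #E ≤ #(Iio κ.ord : Set Ordinal.{u}) := mk_le_mk_of_subset hE
    _ = Cardinal.lift.{u+1} κ.ord.card := Ordinal.mk_Iio_ordinal κ.ord
    _ = Cardinal.lift.{u+1} κ := by rw [card_ord]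
  have h3 : (⨆ ξ : E, #(A ξ.1)) ≤ Cardinal.lift.{u+1} κ := ciSup_le' (fun ξ => hA ξ.1 ξ.2)
  calc #(⋃ ξ ∈ E, A ξ) ≤ Cardinal.lift.{u+1} κ * Cardinal.lift.{u+1} κ :=
        h1.trans (mul_le_mul' h2 h3)
  _ = Cardinal.lift.{u+1} κ := mul_eq_self (aleph0_le_lift.2 hκ.le)

end Split


section SplitSec
variable {κ : Cardinal.{u}} {L : Set (Lex (ℕ → Ordinal.{u}))}

theorem exists_big_child (hκ : ℵ₀ < κ) {S : Set (Lex (ℕ → Ordinal.{u}))} (hS : S ⊆ L)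
    (hval : ∀ x ∈ L, ∀ n, ofLex x n < κ.ord) {l : List Ordinal.{u}}
    (hB : BigSet κ (cls S l)) : ∃ ξ, BigSet κ (cls S (l ++ [ξ])) := by
  by_contra hc
  push_neg at hc
  simp only [BigSet, not_not] at hc
  apply hB
  have hcov : cls S l ⊆ ⋃ ξ ∈ Iio κ.ord, cls S (l ++ [ξ]) := by
    intro x hx
    have hv : ofLex x l.length < κ.ord := hval x (hS (cls_subset S l hx)) l.length
    exact Set.mem_biUnion hv (mem_cls_append hx rfl)
  exact (mk_le_mk_of_subset hcov).trans
    (clsSmallBiUnion hκ _ (fun _ h => h) _ (fun ξ _ => hc ξ))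

theorem big_split (hκ : ℵ₀ < κ) (hval : ∀ x ∈ L, ∀ n, ofLex x n < κ.ord)
    {S : Set (Lex (ℕ → Ordinal.{u}))} (hS : S ⊆ L) (hB : BigSet κ S) :
    ∃ S₁ S₂, S₁ ⊆ S ∧ S₂ ⊆ S ∧ BigSet κ S₁ ∧ BigSet κ S₂ ∧
      ∀ x ∈ S₁, ∀ y ∈ S₂, x < y := by
  classical
  by_contra hsplit
  push_neg at hsplit
  -- `pick l`: a value whose class below `l` is big, if any
  set pick : List Ordinal.{u} → Ordinal.{u} := fun l =>
    if hl : ∃ ξ, BigSet κ (cls S (l ++ [ξ])) then hl.choose else 0 with hpick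
  have huniq : ∀ (l : List Ordinal.{u}) (ξ ξ' : Ordinal.{u}),
      BigSet κ (cls S (l ++ [ξ])) → BigSet κ (cls S (l ++ [ξ'])) → ξ = ξ' := by
    intro l ξ ξ' h1 h2
    rcases lt_trichotomy ξ ξ' with h | h | h
    · obtain ⟨x, hx, y, hy, hle⟩ := hsplit _ _ ((cls_append_subset S l ξ).trans (cls_subset S l))
        ((cls_append_subset S l ξ').trans (cls_subset S l)) h1 h2
      exact absurd (cls_sep h hx hy) hle
    · exact h
    · obtain ⟨x, hx, y, hy, hle⟩ := hsplit _ _ ((cls_append_subset S l ξ').trans (cls_subset S l))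
        ((cls_append_subset S l ξ).trans (cls_subset S l)) h2 h1
      exact absurd (cls_sep h hx hy) hle
  set G : ℕ → List Ordinal.{u} := fun n => Nat.rec [] (fun _ l => l ++ [pick l]) n with hG
  have hGsucc : ∀ n, G (n + 1) = G n ++ [pick (G n)] := fun n => rfl
  have hlen : ∀ n, (G n).length = n := by
    intro n; induction n with
    | zero => rfl
    | succ m ih => rw [hGsucc, List.length_append, ih]; rfl
  have hbigG : ∀ n, BigSet κ (cls S (G n)) := by
    intro n; induction n with
    | zero => rw [show G 0 = [] from rfl, cls_nil]; exact hB
    | succ m ih =>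
      obtain ⟨ξ, hξ⟩ := exists_big_child hκ hS hval ih
      have hex : ∃ ξ, BigSet κ (cls S (G m ++ [ξ])) := ⟨ξ, hξ⟩
      rw [hGsucc, hpick]
      simp only [dif_pos hex]
      exact hex.choose_spec
  -- the residue
  set R : Set (Lex (ℕ → Ordinal.{u})) := {x ∈ S | ∀ n, x ∈ cls S (G n)} with hR
  have hRsub : R.Subsingleton := by
    intro x hx y hy
    have hcoord : ∀ z ∈ R, ∀ j : ℕ, ofLex z j = (G (j+1)).getD j 0 := by
      intro z hz j
      exact (hz.2 (j+1)).2 j (by have := hlen (j+1); omega)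
    have : ofLex x = ofLex y := by
      funext j
      rw [hcoord x hx j, hcoord y hy j]
    exact toLex.injective (by exact this)
  set Diff : ℕ → Set (Lex (ℕ → Ordinal.{u})) :=
    fun n => {x ∈ cls S (G n) | ofLex x ((G n).length) ≠ pick (G n)} with hDiff
  have hDiffSmall : ∀ n, #(Diff n) ≤ Cardinal.lift.{u+1} κ := by
    intro n
    have hcov : Diff n ⊆ ⋃ ξ ∈ (Iio κ.ord \ {pick (G n)}), cls S (G n ++ [ξ]) := by
      rintro x ⟨hx, hne⟩
      have hv : ofLex x ((G n).length) < κ.ord := hval x (hS (cls_subset S _ hx)) _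
      exact Set.mem_biUnion ⟨hv, hne⟩ (mem_cls_append hx rfl)
    refine (mk_le_mk_of_subset hcov).trans
      (clsSmallBiUnion hκ _ (fun ξ h => h.1) _ (fun ξ hξ => ?_))
    by_contra hbig
    exact hξ.2 (huniq (G n) ξ (pick (G n)) hbig (by rw [← hGsucc]; exact hbigG (n+1)))
  have hcover : S ⊆ R ∪ ⋃ n, Diff n := by
    intro x hx
    by_cases hall : ∀ n, x ∈ cls S (G n)
    · exact Or.inl ⟨hx, hall⟩
    · right
      push_neg at hall
      have hex := hall
      classical
      classical
      have hn : ¬ x ∈ cls S (G (Nat.find hex)) := Nat.find_spec hex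
      have hn0 : Nat.find hex ≠ 0 := by
        intro h0
        rw [h0, show G 0 = [] from rfl, cls_nil] at hn
        exact hn hx
      obtain ⟨m, hm⟩ : ∃ m, Nat.find hex = m + 1 := ⟨Nat.find hex - 1, by omega⟩
      have hxm : x ∈ cls S (G m) := not_not.1 (Nat.find_min hex (by omega))
      have hne : ofLex x ((G m).length) ≠ pick (G m) := by
        intro heq
        rw [hm, hGsucc] at hn
        exact hn (mem_cls_append hxm heq)
      exact Set.mem_iUnion.2 ⟨m, hxm, hne⟩
  -- cardinality count
  have hU : #(⋃ n, Diff n) ≤ Cardinal.lift.{u+1} κ := by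
    have hre : (⋃ n, Diff n) = ⋃ m : ULift.{u+1} ℕ, Diff m.down := by
      ext x
      simp only [Set.mem_iUnion]
      exact ⟨fun ⟨n, h⟩ => ⟨⟨n⟩, h⟩, fun ⟨m, h⟩ => ⟨m.down, h⟩⟩
    rw [hre]
    have h1 := mk_iUnion_le (fun m : ULift.{u+1} ℕ => Diff m.down)
    have h2 : #(ULift.{u+1} ℕ) = ℵ₀ := by rw [mk_uLift, mk_nat, lift_aleph0]
    have h3 : (⨆ m : ULift.{u+1} ℕ, #(Diff m.down)) ≤ Cardinal.lift.{u+1} κ :=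
      ciSup_le' (fun m => hDiffSmall m.down)
    calc #(⋃ m : ULift.{u+1} ℕ, Diff m.down) ≤ ℵ₀ * Cardinal.lift.{u+1} κ := by
          rw [← h2]; exact h1.trans (mul_le_mul' le_rfl h3)
    _ = Cardinal.lift.{u+1} κ :=
        mul_eq_right (aleph0_le_lift.2 hκ.le) (aleph0_le_lift.2 hκ.le) aleph0_ne_zero
  apply hB
  calc #S ≤ #(R ∪ ⋃ n, Diff n : Set _) := mk_le_mk_of_subset hcover
  _ ≤ #R + #(⋃ n, Diff n) := mk_union_le _ _
  _ ≤ 1 + Cardinal.lift.{u+1} κ :=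
      add_le_add (mk_le_one_iff_set_subsingleton.2 hRsub) hU
  _ = Cardinal.lift.{u+1} κ :=
      add_eq_right (aleph0_le_lift.2 hκ.le) ((one_le_aleph0).trans (aleph0_le_lift.2 hκ.le))


theorem big_not_scattered (hκ : ℵ₀ < κ) (hval : ∀ x ∈ L, ∀ n, ofLex x n < κ.ord)
    {S₀ : Set (Lex (ℕ → Ordinal.{u}))} (hS₀ : S₀ ⊆ L) (hB : BigSet κ S₀) :
    ∃ F : ℚ → Lex (ℕ → Ordinal.{u}), StrictMono F ∧ ∀ q, F q ∈ S₀ := by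
  classical
  have split3 : ∀ T : Set (Lex (ℕ → Ordinal.{u})), ∃ ABC : Set (Lex (ℕ → Ordinal.{u})) ×
      Set (Lex (ℕ → Ordinal.{u})) × Set (Lex (ℕ → Ordinal.{u})),
      T ⊆ L → BigSet κ T →
      (ABC.1 ⊆ T ∧ ABC.2.1 ⊆ T ∧ ABC.2.2 ⊆ T ∧
       BigSet κ ABC.1 ∧ BigSet κ ABC.2.1 ∧ BigSet κ ABC.2.2 ∧
       (∀ x ∈ ABC.1, ∀ y ∈ ABC.2.1, x < y) ∧
       (∀ x ∈ ABC.2.1, ∀ y ∈ ABC.2.2, x < y) ∧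
       (∀ x ∈ ABC.1, ∀ y ∈ ABC.2.2, x < y)) := by
    intro T
    by_cases h : T ⊆ L ∧ BigSet κ T
    · obtain ⟨S₁, S₂, h1, h2, h3, h4, h5⟩ := big_split hκ hval h.1 h.2
      obtain ⟨S₂₁, S₂₂, g1, g2, g3, g4, g5⟩ := big_split hκ hval (h2.trans h.1) h4
      refine ⟨(S₁, S₂₁, S₂₂), fun _ _ => ?_⟩
      exact ⟨h1, g1.trans h2, g2.trans h2, h3, g3, g4,
        fun x hx y hy => h5 x hx y (g1 hy),
        g5,
        fun x hx y hy => h5 x hx y (g2 hy)⟩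
    · exact ⟨(∅, ∅, ∅), fun h1 h2 => absurd ⟨h1, h2⟩ h⟩
  choose ABC hABC using split3
  set low : Set (Lex (ℕ → Ordinal.{u})) → Set (Lex (ℕ → Ordinal.{u})) :=
    fun T => (ABC T).1 with hlow
  set mid : Set (Lex (ℕ → Ordinal.{u})) → Set (Lex (ℕ → Ordinal.{u})) :=
    fun T => (ABC T).2.1 with hmid
  set high : Set (Lex (ℕ → Ordinal.{u})) → Set (Lex (ℕ → Ordinal.{u})) :=
    fun T => (ABC T).2.2 with hhigh
  set aux : List Bool → Set (Lex (ℕ → Ordinal.{u})) :=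
    fun l => List.rec S₀ (fun b _ ih => (if b then high else low) ih) l with haux
  have aux_cons : ∀ b l, aux (b :: l) = (if b then high else low) (aux l) := fun _ _ => rfl
  set σ : List Bool → Set (Lex (ℕ → Ordinal.{u})) := fun s => aux s.reverse with hσ
  have σ_append : ∀ (s : List Bool) (b : Bool),
      σ (s ++ [b]) = (if b = true then high else low) (σ s) := by
    intro s b
    show aux ((s ++ [b]).reverse) = _
    rw [List.reverse_append]
    rfl
  have auxinv : ∀ l, BigSet κ (aux l) ∧ aux l ⊆ S₀ := by
    intro l
    induction l with
    | nil => exact ⟨hB, subset_rfl⟩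
    | cons b l ih =>
      have hP := hABC (aux l) (ih.2.trans hS₀) ih.1
      rw [aux_cons]
      cases b
      · simpa using ⟨hP.2.2.2.1, hP.1.trans ih.2⟩
      · simpa using ⟨hP.2.2.2.2.2.1, hP.2.2.1.trans ih.2⟩
  have inv : ∀ s, BigSet κ (σ s) ∧ σ s ⊆ S₀ := fun s => auxinv s.reverse
  have hPs : ∀ s, _ := fun s => hABC (σ s) ((inv s).2.trans hS₀) (inv s).1
  have midBig : ∀ s, BigSet κ (mid (σ s)) := fun s => (hPs s).2.2.2.2.1
  have midNe : ∀ s, (mid (σ s)).Nonempty := by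
    intro s
    rcases Set.eq_empty_or_nonempty (mid (σ s)) with h | h
    · exfalso; apply midBig s; rw [h]; simp
    · exact h
  set pt : List Bool → Lex (ℕ → Ordinal.{u}) := fun s => (midNe s).choose with hpt
  have pt_mem : ∀ s, pt s ∈ mid (σ s) := fun s => (midNe s).choose_spec
  have mid_sub : ∀ s, mid (σ s) ⊆ σ s := fun s => (hPs s).2.1
  have σ_mono : ∀ (zu zs : List Bool), σ (zs ++ zu) ⊆ σ zs := by
    intro zu
    induction zu with
    | nil => intro zs; simp
    | cons b zu ih =>
      intro zs
      rw [show zs ++ b :: zu = (zs ++ [b]) ++ zu by simp]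
      refine (ih (zs ++ [b])).trans ?_
      rw [σ_append]
      cases b
      · simpa using (hPs zs).1
      · simpa using (hPs zs).2.2.1
  have σ_false : ∀ s, σ (s ++ [false]) = low (σ s) := by
    intro s; rw [σ_append]; rfl
  have σ_true : ∀ s, σ (s ++ [true]) = high (σ s) := by
    intro s; rw [σ_append]; rfl
  -- the key monotonicity
  have Q : ∀ (s t n : List Bool), toLex (dyv s) < toLex (dyv t) → pt (n ++ s) < pt (n ++ t) := by
    intro s
    induction s with
    | nil =>
      intro t n h
      cases t with
      | nil => exact absurd h (lt_irrefl _)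
      | cons c t' =>
        have hc := dlt_nil_cons h
        subst hc
        rw [List.append_nil]
        have h1 : pt (n ++ true :: t') ∈ σ (n ++ [true]) := by
          have := mid_sub _ (pt_mem (n ++ true :: t'))
          rw [show n ++ true :: t' = (n ++ [true]) ++ t' by simp] at this ⊢
          exact σ_mono t' (n ++ [true]) this
        rw [σ_true] at h1
        exact (hPs n).2.2.2.2.2.2.2.1 _ (pt_mem n) _ h1
    | cons b s' ih =>
      intro t n h
      cases t with
      | nil =>
        have hb := dlt_cons_nil h
        subst hb
        rw [List.append_nil]
        have h1 : pt (n ++ false :: s') ∈ σ (n ++ [false]) := by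
          have := mid_sub _ (pt_mem (n ++ false :: s'))
          rw [show n ++ false :: s' = (n ++ [false]) ++ s' by simp] at this ⊢
          exact σ_mono s' (n ++ [false]) this
        rw [σ_false] at h1
        exact (hPs n).2.2.2.2.2.2.1 _ h1 _ (pt_mem n)
      | cons c t' =>
        rcases dlt_cons_cases h with ⟨hb, hc⟩ | ⟨hbc, h'⟩
        · subst hb; subst hc
          have h1 : pt (n ++ false :: s') ∈ σ (n ++ [false]) := by
            have := mid_sub _ (pt_mem (n ++ false :: s'))
            rw [show n ++ false :: s' = (n ++ [false]) ++ s' by simp] at this ⊢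
            exact σ_mono s' (n ++ [false]) this
          have h2 : pt (n ++ true :: t') ∈ σ (n ++ [true]) := by
            have := mid_sub _ (pt_mem (n ++ true :: t'))
            rw [show n ++ true :: t' = (n ++ [true]) ++ t' by simp] at this ⊢
            exact σ_mono t' (n ++ [true]) this
          rw [σ_false] at h1
          rw [σ_true] at h2
          exact (hPs n).2.2.2.2.2.2.2.2 _ h1 _ h2
        · subst hbc
          have := ih t' (n ++ [b]) h'
          rw [show (n ++ [b]) ++ s' = n ++ b :: s' by simp,
            show (n ++ [b]) ++ t' = n ++ b :: t' by simp] at this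
          exact this
  obtain ⟨E, hE⟩ := exists_rat_emb
  refine ⟨fun q => pt (E q), ?_, ?_⟩
  · intro q q' hq
    have := Q (E q) (E q') [] (hE q q' hq)
    simp only [List.nil_append] at this
    exact this
  · intro q
    exact (inv (E q)).2 (mid_sub _ (pt_mem (E q)))

end SplitSec

end AuxLemmas

/-- If `f` is a disjointing weak scale of length `κ⁺` in `∏ n, lam n` and
`L = {f α : α < κ⁺}` is ordered lexicographically, then `L` has a weakly dense subset of
cardinality `κ`, `L` is not σ-scattered, and every subordering of `L` of cardinality at
most `κ` is σ-wellordered. -/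
theorem disjointing_weak_scale_gives_incompact_line (κ : Cardinal.{u})
    (hκ : ℵ₀ < κ) (hcof : κ.ord.cof = ℵ₀)
    (lam : ℕ → Ordinal.{u}) (hlam : ∀ n, lam n < κ.ord)
    (hlamcf : ∀ η < κ, {n | (lam n).cof < η}.Finite)
    (f : Ordinal.{u} → ℕ → Ordinal.{u})
    (hscale : IsWeakScale κ lam (Order.succ κ).ord f)
    (hdisj : IsDisjointing (Order.succ κ).ord f)
    (L : Set (Lex (ℕ → Ordinal.{u})))
    (hL : L = {x | ∃ α < (Order.succ κ).ord, toLex (f α) = x}) :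
    (∃ D ⊆ L, #D = Cardinal.lift.{u + 1, u} κ ∧ WeaklyDenseIn D L) ∧
    ¬ IsSigmaScatteredSet L ∧
    ∀ A ⊆ L, #A ≤ Cardinal.lift.{u + 1, u} κ → IsSigmaWellOrderedSet A := by
  classical
  have hsucc_lt : κ.ord < (Order.succ κ).ord := Cardinal.ord_lt_ord.2 (Order.lt_succ κ)
  have hval : ∀ x ∈ L, ∀ n, ofLex x n < κ.ord := by
    intro x hx n
    rw [hL] at hx
    obtain ⟨α, hα, rfl⟩ := hx
    exact hscale.1 α hα n
  have hLf : ∀ α, α < (Order.succ κ).ord → toLex (f α) ∈ L := by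
    intro α hα; rw [hL]; exact ⟨α, hα, rfl⟩
  have hne : ∀ α γ, α < γ → γ < (Order.succ κ).ord → toLex (f α) ≠ toLex (f γ) := by
    intro α γ hlt hγ heq
    obtain ⟨n, hn⟩ := (hscale.2.1 α γ hlt hγ).infinite_compl.nonempty
    have hn' : f α n < f γ n := by simpa using hn
    have hfe : f α = f γ := congrArg ofLex heq
    rw [hfe] at hn'
    exact lt_irrefl _ hn'
  have hne' : ∀ α γ, α ≠ γ → α < (Order.succ κ).ord → γ < (Order.succ κ).ord →
      toLex (f α) ≠ toLex (f γ) := by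
    intro α γ h hα hγ
    rcases h.lt_or_gt with h1 | h1
    · exact hne α γ h1 hγ
    · exact fun heq => hne γ α h1 hα heq.symm
  have hIio : #(↥(Iio κ.ord : Set Ordinal.{u})) = Cardinal.lift.{u+1} κ := by
    rw [Ordinal.mk_Iio_ordinal, Cardinal.card_ord]
  have hLbig : Cardinal.lift.{u+1} (Order.succ κ) ≤ #L := by
    have hinj : Function.Injective
        (fun α : ↥(Iio ((Order.succ κ).ord) : Set Ordinal.{u}) =>
          (⟨toLex (f α.1), hLf α.1 α.2⟩ : ↥L)) := by
      intro α β h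
      simp only [Subtype.mk_eq_mk] at h
      by_contra hne2
      exact hne' α.1 β.1 (fun hh => hne2 (Subtype.ext hh)) α.2 β.2 h
    have h1 := Cardinal.mk_le_of_injective hinj
    rwa [Ordinal.mk_Iio_ordinal, Cardinal.card_ord] at h1
  refine ⟨?_, ?_, ?_⟩
  -- Part 1 : weakly dense subset of size κ
  · have h0lt : (0 : Ordinal.{u}) < (Order.succ κ).ord :=
      lt_of_le_of_lt zero_le hsucc_lt
    have hx₀ : toLex (f 0) ∈ L := hLf 0 h0lt
    set x₀ : Lex (ℕ → Ordinal.{u}) := toLex (f 0) with hx₀def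
    set Zd : List Ordinal.{u} → Ordinal.{u} → Set (Lex (ℕ → Ordinal.{u})) :=
      fun l ξ => {x ∈ cls L l | ofLex x l.length < ξ} with hZd
    set c2 : List Ordinal.{u} → Lex (ℕ → Ordinal.{u}) :=
      fun l => if h : (Zd l.tail (l.getD 0 0)).Nonempty then h.choose else x₀ with hc2
    set c3 : List Ordinal.{u} → Lex (ℕ → Ordinal.{u}) :=
      fun l => if h : ∃ b ∈ cls L l, ∀ y ∈ cls L l, b ≤ y then h.choose else x₀ with hc3
    set W : Set (List Ordinal.{u}) := {l | ∀ o ∈ l, o < κ.ord} with hW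
    set P : Set (Lex (ℕ → Ordinal.{u})) :=
      Set.range (fun α : ↥(Iio κ.ord : Set Ordinal.{u}) => toLex (f α.1)) with hP
    have hc2spec : ∀ l : List Ordinal.{u}, c2 l ∈ L ∧
        ((Zd l.tail (l.getD 0 0)).Nonempty → c2 l ∈ Zd l.tail (l.getD 0 0)) := by
      intro l
      rw [hc2]; dsimp only
      split_ifs with h
      · exact ⟨h.choose_spec.1.1, fun _ => h.choose_spec⟩
      · exact ⟨hx₀, fun hne2 => absurd hne2 h⟩
    have hc3spec : ∀ l : List Ordinal.{u}, c3 l ∈ L ∧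
        ((∃ b ∈ cls L l, ∀ y ∈ cls L l, b ≤ y) →
          c3 l ∈ cls L l ∧ ∀ y ∈ cls L l, c3 l ≤ y) := by
      intro l
      rw [hc3]; dsimp only
      split_ifs with h
      · exact ⟨h.choose_spec.1.1, fun _ => h.choose_spec⟩
      · exact ⟨hx₀, fun hne2 => absurd hne2 h⟩
    set D : Set (Lex (ℕ → Ordinal.{u})) := c2 '' W ∪ c3 '' W ∪ P with hD
    have hDL : D ⊆ L := by
      rintro x ((⟨l, _, rfl⟩ | ⟨l, _, rfl⟩) | ⟨α, rfl⟩)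
      · exact (hc2spec l).1
      · exact (hc3spec l).1
      · exact hLf α.1 (α.2.trans hsucc_lt)
    have hPcard : #(↥P) = Cardinal.lift.{u+1} κ := by
      rw [hP, Cardinal.mk_range_eq _ ?_, hIio]
      intro α β h
      by_contra hne2
      exact hne' α.1 β.1 (fun hh => hne2 (Subtype.ext hh)) (α.2.trans hsucc_lt)
        (β.2.trans hsucc_lt) h
    have hinfIio : Infinite (↥(Iio κ.ord : Set Ordinal.{u})) := by
      rw [Cardinal.infinite_iff, hIio]
      exact aleph0_le_lift.2 hκ.le
    have hWcard : #(↥W) ≤ Cardinal.lift.{u+1} κ := by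
      have hinj : Function.Injective (fun l : ↥W =>
          l.1.pmap (fun o h => (⟨o, h⟩ : ↥(Iio κ.ord : Set Ordinal.{u})))
            (fun o ho => l.2 o ho)) := by
        intro l1 l2 h
        apply Subtype.ext
        have h1 := congrArg (List.map Subtype.val) h
        dsimp only at h1
        exact ((List.map_pmap _).trans (List.pmap_eq_self.2 fun _ _ => rfl)).symm.trans
          (h1.trans ((List.map_pmap _).trans (List.pmap_eq_self.2 fun _ _ => rfl)))
      calc #(↥W) ≤ #(List (↥(Iio κ.ord : Set Ordinal.{u}))) := Cardinal.mk_le_of_injective hinj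
      _ = #(↥(Iio κ.ord : Set Ordinal.{u})) := Cardinal.mk_list_eq_mk _
      _ = Cardinal.lift.{u+1} κ := hIio
    have hDcard : #(↥D) = Cardinal.lift.{u+1} κ := by
      have hle : #(↥D) ≤ Cardinal.lift.{u+1} κ := by
        have h1 : #(↥D) ≤ #(↥(c2 '' W ∪ c3 '' W : Set (Lex (ℕ → Ordinal.{u})))) + #(↥P) := by
          rw [hD]; exact mk_union_le _ _
        have h2 : #(↥(c2 '' W ∪ c3 '' W : Set (Lex (ℕ → Ordinal.{u})))) ≤
            #(↥(c2 '' W : Set (Lex (ℕ → Ordinal.{u})))) + #(↥(c3 '' W : Set (Lex (ℕ → Ordinal.{u})))) :=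
          mk_union_le _ _
        have h3 : #(↥(c2 '' W : Set (Lex (ℕ → Ordinal.{u})))) ≤ Cardinal.lift.{u+1} κ :=
          (mk_image_le).trans hWcard
        have h4 : #(↥(c3 '' W : Set (Lex (ℕ → Ordinal.{u})))) ≤ Cardinal.lift.{u+1} κ :=
          (mk_image_le).trans hWcard
        have hil : ℵ₀ ≤ Cardinal.lift.{u+1} κ := aleph0_le_lift.2 hκ.le
        calc #(↥D) ≤ (Cardinal.lift.{u+1} κ + Cardinal.lift.{u+1} κ) + Cardinal.lift.{u+1} κ :=
              h1.trans (add_le_add (h2.trans (add_le_add h3 h4)) hPcard.le)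
        _ = Cardinal.lift.{u+1} κ := by rw [add_eq_self hil, add_eq_self hil]
      have hge : Cardinal.lift.{u+1} κ ≤ #(↥D) := by
        rw [← hPcard]
        exact mk_le_mk_of_subset (by rw [hD]; exact Set.subset_union_right)
      exact le_antisymm hle hge
    refine ⟨D, hDL, hDcard, ?_⟩
    -- weak density
    intro a ha c hc hlt
    obtain ⟨n₀, hag, hn₀⟩ := olex_lt_dest hlt
    by_cases hcase : ∃ m, n₀ < m ∧ ∃ x ∈ L,
        (∀ j < m, ofLex x j = ofLex c j) ∧ ofLex x m < ofLex c m
    · obtain ⟨m, hm, x, hxL, hxag, hxlt⟩ := hcase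
      set w : List Ordinal.{u} := List.ofFn (fun i : Fin m => ofLex c i.1) with hw
      have hwlen : w.length = m := by rw [hw, List.length_ofFn]
      have hwget : ∀ j < m, w.getD j 0 = ofLex c j := by
        intro j hj
        rw [hw, List.getD_eq_getElem _ _ (by rw [List.length_ofFn]; exact hj),
          List.getElem_ofFn]
      have hwmem : ∀ j < m, ∀ z : Lex (ℕ → Ordinal.{u}),
          z ∈ cls L w → ofLex z j = ofLex c j := by
        intro j hj z hz
        rw [← hwget j hj]
        exact hz.2 j (by rw [hwlen]; exact hj)
      have hxw : x ∈ cls L w := by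
        refine ⟨hxL, fun j hj => ?_⟩
        rw [hwlen] at hj
        rw [hwget j hj]
        exact hxag j hj
      set l : List Ordinal.{u} := ofLex c m :: w with hl
      have hlW : l ∈ W := by
        intro o ho
        rw [hl, List.mem_cons] at ho
        rcases ho with rfl | ho
        · exact hval c hc m
        · rw [hw, List.mem_ofFn] at ho
          obtain ⟨i, rfl⟩ := ho
          exact hval c hc i.1
      have hZne : (Zd l.tail (l.getD 0 0)).Nonempty := by
        refine ⟨x, ?_⟩
        rw [hZd]
        show x ∈ {z ∈ cls L w | ofLex z w.length < ofLex c m}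
        exact ⟨hxw, by rw [hwlen]; exact hxlt⟩
      set b : Lex (ℕ → Ordinal.{u}) := c2 l with hb
      have hbZ : b ∈ Zd l.tail (l.getD 0 0) := (hc2spec l).2 hZne
      have hbcls : b ∈ cls L w := hbZ.1
      have hbm : ofLex b m < ofLex c m := by
        have := hbZ.2
        rwa [show (l.tail : List Ordinal.{u}) = w from rfl, hwlen,
          show (l.getD 0 0 : Ordinal.{u}) = ofLex c m from rfl] at this
      refine ⟨b, ?_, ?_, ?_⟩
      · rw [hD]; exact Or.inl (Or.inl ⟨l, hlW, rfl⟩)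
      · apply le_of_lt
        apply olex_lt_of a b n₀
        · intro j hj
          rw [hag j hj, hwmem j (hj.trans hm) b hbcls]
        · rw [hwmem n₀ hm b hbcls]
          exact hn₀
      · apply le_of_lt
        apply olex_lt_of b c m
        · intro j hj
          exact hwmem j hj b hbcls
        · exact hbm
    · push_neg at hcase
      set w : List Ordinal.{u} := List.ofFn (fun i : Fin (n₀+1) => ofLex c i.1) with hw
      have hwlen : w.length = n₀ + 1 := by rw [hw, List.length_ofFn]
      have hwget : ∀ j < n₀ + 1, w.getD j 0 = ofLex c j := by
        intro j hj
        rw [hw, List.getD_eq_getElem _ _ (by rw [List.length_ofFn]; exact hj),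
          List.getElem_ofFn]
      have hwmem : ∀ j < n₀ + 1, ∀ z : Lex (ℕ → Ordinal.{u}),
          z ∈ cls L w → ofLex z j = ofLex c j := by
        intro j hj z hz
        rw [← hwget j hj]
        exact hz.2 j (by rw [hwlen]; exact hj)
      have hcw : c ∈ cls L w := by
        refine ⟨hc, fun j hj => ?_⟩
        rw [hwlen] at hj
        rw [hwget j hj]
      have hwW : w ∈ W := by
        intro o ho
        rw [hw, List.mem_ofFn] at ho
        obtain ⟨i, rfl⟩ := ho
        exact hval c hc i.1
      have hleast : ∃ b ∈ cls L w, ∀ y ∈ cls L w, b ≤ y := by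
        refine ⟨c, hcw, fun y hy => ?_⟩
        rcases lt_trichotomy y c with h1 | h1 | h1
        · exfalso
          obtain ⟨i, hag', hlt'⟩ := olex_lt_dest h1
          have hi : n₀ < i := by
            by_contra hi
            push_neg at hi
            have := hwmem i (by omega) y hy
            rw [this] at hlt'
            exact lt_irrefl _ hlt'
          exact absurd hlt' (not_lt.2 (hcase i hi y hy.1 (fun j hj => hag' j hj)))
        · exact le_of_eq h1.symm
        · exact le_of_lt h1
      set b : Lex (ℕ → Ordinal.{u}) := c3 w with hb
      obtain ⟨hbcls, hbleast⟩ := (hc3spec w).2 hleast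
      refine ⟨b, ?_, ?_, ?_⟩
      · rw [hD]; exact Or.inl (Or.inr ⟨w, hwW, rfl⟩)
      · apply le_of_lt
        apply olex_lt_of a b n₀
        · intro j hj
          rw [hag j hj, hwmem j (by omega) b hbcls]
        · rw [hwmem n₀ (by omega) b hbcls]
          exact hn₀
      · exact hbleast c hcw
  -- Part 2 : not σ-scattered
  · rintro ⟨S, hSU, hScat⟩
    have hbig : ∃ n, BigSet κ (S n) := by
      by_contra hall
      push_neg at hall
      simp only [BigSet, not_not] at hall
      have h1 : #(↥L) ≤ Cardinal.lift.{u+1} κ := by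
        have hre : L = ⋃ m : ULift.{u+1} ℕ, S m.down := by
          rw [← hSU]
          ext x
          simp only [Set.mem_iUnion]
          exact ⟨fun ⟨n, h⟩ => ⟨⟨n⟩, h⟩, fun ⟨m, h⟩ => ⟨m.down, h⟩⟩
        rw [hre]
        have h2 : #(ULift.{u+1} ℕ) = ℵ₀ := by rw [mk_uLift, mk_nat, lift_aleph0]
        calc #(↥(⋃ m : ULift.{u+1} ℕ, S m.down))
            ≤ #(ULift.{u+1} ℕ) * ⨆ m : ULift.{u+1} ℕ, #(↥(S m.down)) := mk_iUnion_le _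
        _ ≤ ℵ₀ * Cardinal.lift.{u+1} κ := by
            rw [h2]; exact mul_le_mul' le_rfl (ciSup_le' fun m => hall m.down)
        _ = Cardinal.lift.{u+1} κ :=
            mul_eq_right (aleph0_le_lift.2 hκ.le) (aleph0_le_lift.2 hκ.le) aleph0_ne_zero
      have h3 := hLbig.trans h1
      rw [Cardinal.lift_le] at h3
      exact absurd h3 (not_le.2 (Order.lt_succ κ))
    obtain ⟨n, hbign⟩ := hbig
    have hsub : S n ⊆ L := by rw [← hSU]; exact Set.subset_iUnion S n
    obtain ⟨F, hF1, hF2⟩ := big_not_scattered hκ hval hsub hbign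
    exact hScat n ⟨F, hF1, hF2⟩
  -- Part 3 : small subsets are σ-wellordered
  · intro A hA hAcard
    have hex : ∀ x, x ∈ A → ∃ α, α < (Order.succ κ).ord ∧ toLex (f α) = x := by
      intro x hx
      have := hA hx
      rw [hL] at this
      obtain ⟨α, h1, h2⟩ := this
      exact ⟨α, h1, h2⟩
    -- a bound for the indices
    have hordcard : #(κ.ord.ToType) = κ := by rw [Cardinal.mk_toType, Cardinal.card_ord]
    have hemb : Nonempty (↥A ↪ κ.ord.ToType) := by
      rw [← Cardinal.lift_mk_le', hordcard, Cardinal.lift_id'.{u, u+1}]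
      exact hAcard
    obtain ⟨e⟩ := hemb
    set F : κ.ord.ToType → Ordinal.{u} := fun i =>
      if h : ∃ x : ↥A, e x = i then (hex h.choose.1 h.choose.2).choose else 0 with hF
    have hFlt : ∀ i, F i < (Order.succ κ).ord := by
      intro i
      rw [hF]; dsimp only
      split_ifs with h
      · exact (hex h.choose.1 h.choose.2).choose_spec.1
      · exact lt_of_le_of_lt zero_le hsucc_lt
    have hreg : ((Order.succ κ).ord).cof = Order.succ κ :=
      (Cardinal.isRegular_succ hκ.le).cof_eq
    have hβ : iSup F < (Order.succ κ).ord := by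
      apply Ordinal.iSup_lt_ord _ hFlt
      rw [hordcard, hreg]
      exact Order.lt_succ κ
    have hislim : Order.IsSuccLimit ((Order.succ κ).ord) :=
      Cardinal.isSuccLimit_ord (hκ.le.trans (Order.le_succ κ))
    have hβ1 : Order.succ (iSup F) < (Order.succ κ).ord := hislim.succ_lt hβ
    have key : ∀ (z w : ↥A), z = w → (hex z.1 z.2).choose = (hex w.1 w.2).choose := by
      rintro z w rfl; rfl
    have hixle : ∀ x (hx : x ∈ A), (hex x hx).choose ≤ iSup F := by
      intro x hx
      have h1 : ∃ y : ↥A, e y = e ⟨x, hx⟩ := ⟨⟨x, hx⟩, rfl⟩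
      have h2 : h1.choose = ⟨x, hx⟩ := e.injective h1.choose_spec
      have h3 : F (e ⟨x, hx⟩) = (hex x hx).choose := by
        rw [hF]; dsimp only
        rw [dif_pos h1]
        exact key h1.choose ⟨x, hx⟩ h2
      calc (hex x hx).choose = F (e ⟨x, hx⟩) := h3.symm
      _ ≤ iSup F := le_ciSup (Ordinal.bddAbove_range F) _
    obtain ⟨N, hN⟩ := hdisj (Order.succ (iSup F)) hβ1
    set S : ℕ → Set (Lex (ℕ → Ordinal.{u})) :=
      fun k => {x | ∃ hx : x ∈ A, N ((hex x hx).choose) = k} with hS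
    refine ⟨S, ?_, ?_⟩
    · ext x
      simp only [Set.mem_iUnion, hS, Set.mem_setOf_eq]
      constructor
      · rintro ⟨k, hx, _⟩; exact hx
      · intro hx; exact ⟨N ((hex x hx).choose), hx, rfl⟩
    · intro k T hT hTne
      -- iterated minimisation
      set TT : ℕ → Set (Lex (ℕ → Ordinal.{u})) := fun j =>
        Nat.rec T (fun j Tj => {x ∈ Tj | ofLex x j = sInf ((fun z : Lex (ℕ → Ordinal.{u}) => ofLex z j) '' Tj)}) j
        with hTT
      have TT0 : TT 0 = T := rfl
      have TTsucc : ∀ j, TT (j+1) =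
          {x ∈ TT j | ofLex x j = sInf ((fun z : Lex (ℕ → Ordinal.{u}) => ofLex z j) '' TT j)} := fun j => rfl
      have TTsub : ∀ j, TT j ⊆ T := by
        intro j
        induction j with
        | zero => exact subset_rfl
        | succ j ih => rw [TTsucc]; exact fun x hx => ih hx.1
      have TTmono : ∀ i j, i ≤ j → TT j ⊆ TT i := by
        intro i j hij
        induction j, hij using Nat.le_induction with
        | base => exact subset_rfl
        | succ j hij ih => rw [TTsucc]; exact fun x hx => ih hx.1
      have TTne : ∀ j, (TT j).Nonempty := by
        intro j
        induction j with
        | zero => exact hTne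
        | succ j ih =>
          have himg : ((fun z : Lex (ℕ → Ordinal.{u}) => ofLex z j) '' TT j).Nonempty := ih.image _
          have := csInf_mem himg
          obtain ⟨x, hxTT, hxv⟩ := this
          exact ⟨x, hxTT, hxv⟩
      have TTag : ∀ j, ∀ x ∈ TT j, ∀ y ∈ TT j, ∀ i < j, ofLex x i = ofLex y i := by
        intro j
        induction j with
        | zero => intro x _ y _ i hi; omega
        | succ j ih =>
          intro x hx y hy i hi
          rcases Nat.lt_or_ge i j with h1 | h1
          · exact ih x hx.1 y hy.1 i h1
          · have h2 : i = j := by omega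
            subst h2
            rw [hx.2, hy.2]
      -- least index at level k
      set Iset : Set Ordinal.{u} :=
        {o | ∃ x ∈ TT k, ∃ hx : x ∈ A, (hex x hx).choose = o} with hIset
      have hIne : Iset.Nonempty := by
        obtain ⟨x, hx⟩ := TTne k
        have hxA : x ∈ A := by
          obtain ⟨hxa, _⟩ := hT (TTsub k hx)
          exact hxa
        exact ⟨(hex x hxA).choose, x, hx, hxA, rfl⟩
      obtain ⟨b, hbTT, hbA, hbμ⟩ := csInf_mem hIne
      refine ⟨b, TTsub k hbTT, ?_⟩
      intro y hyT
      obtain ⟨hyA, hyN⟩ := hT hyT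
      obtain ⟨hbA2, hbN⟩ := hT (TTsub k hbTT)
      have hbrep : ofLex b = f ((hex b hbA).choose) :=
        (congrArg ofLex (hex b hbA).choose_spec.2).symm
      have hyrep : ofLex y = f ((hex y hyA).choose) :=
        (congrArg ofLex (hex y hyA).choose_spec.2).symm
      by_cases hyk : y ∈ TT k
      · rcases eq_or_ne ((hex y hyA).choose) ((hex b hbA).choose) with heq | hne2
        · have : y = b := by
            rw [← (hex y hyA).choose_spec.2, ← (hex b hbA).choose_spec.2, heq]
          rw [this]
        · have hle1 : sInf Iset ≤ (hex y hyA).choose := csInf_le' ⟨y, hyk, hyA, rfl⟩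
          rw [← hbμ] at hle1
          have hμlt : (hex b hbA).choose < (hex y hyA).choose :=
            lt_of_le_of_ne hle1 (Ne.symm hne2)
          have hflt : f ((hex b hbA).choose) k < f ((hex y hyA).choose) k := by
            apply hN _ _ hμlt (Order.lt_succ_iff.2 (hixle y hyA)) k
            · exact le_of_eq hbN
            · exact le_of_eq hyN
          apply le_of_lt
          apply olex_lt_of b y k
          · intro j hj; exact TTag k b hbTT y hyk j hj
          · rw [hbrep, hyrep]; exact hflt
      · have hyex : ∃ j, ¬ y ∈ TT j := ⟨k, hyk⟩
        have hfind := Nat.find_spec hyex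
        have hne0 : Nat.find hyex ≠ 0 := by
          intro h0
          rw [h0, TT0] at hfind
          exact hfind hyT
        obtain ⟨j, hj⟩ : ∃ j, Nat.find hyex = j + 1 := ⟨Nat.find hyex - 1, by omega⟩
        have hyj : y ∈ TT j := not_not.1 (Nat.find_min hyex (by omega))
        have hjk : j < k := by
          have := Nat.find_min' hyex hyk
          omega
        have hyj1 : y ∉ TT (j+1) := by rw [← hj]; exact hfind
        have hyval : ofLex y j ≠ sInf ((fun z : Lex (ℕ → Ordinal.{u}) => ofLex z j) '' TT j) :=
          fun hv => hyj1 ⟨hyj, hv⟩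
        have hyge : sInf ((fun z : Lex (ℕ → Ordinal.{u}) => ofLex z j) '' TT j) ≤ ofLex y j :=
          csInf_le' ⟨y, hyj, rfl⟩
        have hbj1 : b ∈ TT (j+1) := TTmono (j+1) k (by omega) hbTT
        have hblt : ofLex b j < ofLex y j := by
          rw [hbj1.2]
          exact lt_of_le_of_ne hyge (Ne.symm hyval)
        apply le_of_lt
        apply olex_lt_of b y j
        · intro i hi
          exact TTag j b (TTmono j k (le_of_lt hjk) hbTT) y hyj i hi
        · exact hblt
end
end

section
/- Let λ be an infinite regular cardinal and let L be a scattered linear order with |L| ≥ λ. Then at least one of λ and λ* (the reverse order of λ) embeds into L. -/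
open Cardinal Set

universe u v

noncomputable section

lemma exists_strictMono_ord_toType (lam : Cardinal.{u}) (M : Type u) [LinearOrder M]
    (hb : ∀ s : Set M, #s < lam → ∃ y, ∀ x ∈ s, x < y) :
    ∃ g : lam.ord.ToType → M, StrictMono g := by
  classical
  have wf : WellFounded ((· < ·) : lam.ord.ToType → lam.ord.ToType → Prop) :=
    (inferInstance : WellFoundedLT lam.ord.ToType).wf
  have key : ∀ (i : lam.ord.ToType) (f : ∀ j, j < i → M),
      ∃ y : M, ∀ j (h : j < i), f j h < y := by
    intro i f
    have h1 : #(Set.range fun j : Set.Iio i => f j j.2) < lam :=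
      lt_of_le_of_lt mk_range_le (Cardinal.mk_Iio_ord_toType i)
    obtain ⟨y, hy⟩ := hb _ h1
    exact ⟨y, fun j h => hy _ ⟨⟨j, h⟩, rfl⟩⟩
  let g : lam.ord.ToType → M := wf.fix (fun i ih => Classical.choose (key i ih))
  have hg : ∀ i, g i = Classical.choose (key i (fun j _ => g j)) := fun i =>
    wf.fix_eq _ i
  refine ⟨g, fun j i h => ?_⟩
  have := Classical.choose_spec (key i (fun j _ => g j)) j h
  rw [hg i]; exact this

lemma exists_split_point (lam : Cardinal.{u}) (hreg : lam.IsRegular)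
    (L : Type u) [LinearOrder L]
    (hL : ¬ ∃ g : lam.ord.ToType → L, StrictMono g)
    (hR : ¬ ∃ g : lam.ord.ToType → L, StrictAnti g)
    (A : Set L) (hA : lam ≤ #A) :
    ∃ x ∈ A, lam ≤ #(A ∩ Iio x : Set L) ∧ lam ≤ #(A ∩ Ioi x : Set L) := by
  classical
  -- the set of points with small left part
  set A' : Set L := {x ∈ A | #(A ∩ Iio x : Set L) < lam} with hA'def
  set A'' : Set L := {x ∈ A | #(A ∩ Ioi x : Set L) < lam} with hA''def
  have hbig : ∀ B : Set L, B ⊆ A →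
      (∀ x ∈ B, #(A ∩ Iio x : Set L) < lam) → lam ≤ #B →
      ∃ g : lam.ord.ToType → (↥B), StrictMono g := by
    intro B hBA hsmall hBbig
    apply exists_strictMono_ord_toType lam
    intro s hs
    have hsL : #(Subtype.val '' s) < lam := lt_of_le_of_lt mk_image_le hs
    set T : Set L := (Subtype.val '' s) ∪
      ⋃ x : ↥(Subtype.val '' s), (A ∩ Iio (x : L)) with hTdef
    have hT : #T < lam := by
      apply lt_of_le_of_lt (mk_union_le _ _)
      apply Cardinal.add_lt_of_lt hreg.aleph0_le hsL
      apply lt_of_le_of_lt (mk_iUnion_le _)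
      apply Cardinal.mul_lt_of_lt hreg.aleph0_le hsL
      apply Cardinal.iSup_lt_of_isRegular hreg hsL
      intro i
      exact hsmall _ (by obtain ⟨⟨x, hx⟩, hxs, rfl⟩ := i.2; exact hx)
    have hnot : ¬ B ⊆ T := fun h => (hBbig.trans (mk_le_mk_of_subset h)).not_gt hT
    obtain ⟨y, hyB, hyT⟩ := not_subset.1 hnot
    refine ⟨⟨y, hyB⟩, fun x hx => ?_⟩
    have hxT : (x : L) ∈ T := Or.inl ⟨x, hx, rfl⟩
    rcases lt_trichotomy (x : L) y with h | h | h
    · exact h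
    · exact absurd (h ▸ hxT) hyT
    · refine absurd ?_ hyT
      rw [hTdef]
      exact Or.inr (mem_iUnion.2 ⟨⟨(x : L), ⟨x, hx, rfl⟩⟩, hBA hyB, h⟩)
  have hA' : #A' < lam := by
    by_contra h
    push_neg at h
    obtain ⟨g, hg⟩ := hbig A' (fun x hx => hx.1) (fun x hx => hx.2) h
    exact hL ⟨fun i => (g i : L), fun i j hij => hg hij⟩
  have hA'' : #A'' < lam := by
    by_contra h
    push_neg at h
    -- dual argument
    have hbig2 : ∃ g : lam.ord.ToType → (↥A'')ᵒᵈ, StrictMono g := by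
      apply exists_strictMono_ord_toType lam
      intro s hs
      have hsL : #(Subtype.val '' (OrderDual.ofDual '' s)) < lam :=
        lt_of_le_of_lt mk_image_le (lt_of_le_of_lt mk_image_le hs)
      set T : Set L := (Subtype.val '' (OrderDual.ofDual '' s)) ∪
        ⋃ x : ↥(Subtype.val '' (OrderDual.ofDual '' s)), (A ∩ Ioi (x : L)) with hTdef
      have hT : #T < lam := by
        apply lt_of_le_of_lt (mk_union_le _ _)
        apply Cardinal.add_lt_of_lt hreg.aleph0_le hsL
        apply lt_of_le_of_lt (mk_iUnion_le _)
        apply Cardinal.mul_lt_of_lt hreg.aleph0_le hsL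
        apply Cardinal.iSup_lt_of_isRegular hreg hsL
        intro i
        exact (by obtain ⟨⟨x, hx⟩, hxs, rfl⟩ := i.2; exact hx.2 : #(A ∩ Ioi (i : L) : Set L) < lam)
      have hnot : ¬ A'' ⊆ T := fun hsub => (h.trans (mk_le_mk_of_subset hsub)).not_gt hT
      obtain ⟨y, hyB, hyT⟩ := not_subset.1 hnot
      refine ⟨OrderDual.toDual (⟨y, hyB⟩ : ↥A''), fun x hx => ?_⟩
      have hxT : ((OrderDual.ofDual x : ↥A'') : L) ∈ T :=
        Or.inl ⟨OrderDual.ofDual x, ⟨x, hx, rfl⟩, rfl⟩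
      -- goal: x < toDual ⟨y,_⟩ in dual order, i.e. y < x in L
      change y < ((OrderDual.ofDual x : ↥A'') : L)
      rcases lt_trichotomy y ((OrderDual.ofDual x : ↥A'') : L) with h' | h' | h'
      · exact h'
      · exact absurd (h' ▸ hxT) hyT
      · refine absurd ?_ hyT
        rw [hTdef]
        exact Or.inr (mem_iUnion.2
          ⟨⟨_, ⟨OrderDual.ofDual x, ⟨x, hx, rfl⟩, rfl⟩⟩, hyB.1, h'⟩)
    obtain ⟨g, hg⟩ := hbig2
    exact hR ⟨fun i => ((OrderDual.ofDual (g i) : ↥A'') : L), fun i j hij => hg hij⟩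
  have hunion : #(A' ∪ A'' : Set L) < lam :=
    lt_of_le_of_lt (mk_union_le _ _) (Cardinal.add_lt_of_lt hreg.aleph0_le hA' hA'')
  have hnot : ¬ A ⊆ A' ∪ A'' := fun h => (hA.trans (mk_le_mk_of_subset h)).not_gt hunion
  obtain ⟨x, hxA, hx⟩ := not_subset.1 hnot
  refine ⟨x, hxA, ?_, ?_⟩
  · by_contra h; exact hx (Or.inl ⟨hxA, not_le.1 h⟩)
  · by_contra h; exact hx (Or.inr ⟨hxA, not_le.1 h⟩)

lemma list_prefix_tricho : ∀ s t : List Bool, s <+: t ∨ t <+: s ∨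
    ∃ r a b p q, a ≠ b ∧ s = r ++ a :: p ∧ t = r ++ b :: q := by
  intro s
  induction s with
  | nil => intro t; exact Or.inl (List.nil_prefix)
  | cons a u ih =>
    intro t
    cases t with
    | nil => exact Or.inr (Or.inl (List.nil_prefix))
    | cons b v =>
      by_cases hab : a = b
      · subst hab
        rcases ih v with ⟨w, hw⟩ | ⟨w, hw⟩ | ⟨r, x, y, p, q, hxy, hp, hq⟩
        · exact Or.inl ⟨w, by rw [List.cons_append, hw]⟩
        · exact Or.inr (Or.inl ⟨w, by rw [List.cons_append, hw]⟩)
        · exact Or.inr (Or.inr ⟨a :: r, x, y, p, q, hxy, by rw [hp]; rfl, by rw [hq]; rfl⟩)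
      · exact Or.inr (Or.inr ⟨[], a, b, u, v, hab, rfl, rfl⟩)

lemma list_suffix_tricho (s t : List Bool) : s = t ∨ (∃ u b, t = u ++ b :: s) ∨
    (∃ u b, s = u ++ b :: t) ∨
    (∃ r a b u v, a ≠ b ∧ s = u ++ a :: r ∧ t = v ++ b :: r) := by
  rcases list_prefix_tricho s.reverse t.reverse with ⟨w, hw⟩ | ⟨w, hw⟩ | ⟨r, a, b, p, q, hab, hp, hq⟩
  · cases w with
    | nil =>
      left
      have := congrArg List.reverse hw
      simpa using this
    | cons c w' =>
      refine Or.inr (Or.inl ⟨w'.reverse, c, ?_⟩)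
      have := congrArg List.reverse hw
      simpa using this.symm
  · cases w with
    | nil =>
      left
      have := congrArg List.reverse hw
      simpa using this.symm
    | cons c w' =>
      refine Or.inr (Or.inr (Or.inl ⟨w'.reverse, c, ?_⟩))
      have := congrArg List.reverse hw
      simpa using this.symm
  · refine Or.inr (Or.inr (Or.inr ⟨r.reverse, a, b, p.reverse, q.reverse, hab, ?_, ?_⟩))
    · have := congrArg List.reverse hp
      simpa using this
    · have := congrArg List.reverse hq
      simpa using this

theorem main_thm (lam : Cardinal.{u}) (hreg : lam.IsRegular)
    (L : Type u) [LinearOrder L] (hcard : lam ≤ #L)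
    (hscat : ¬ ∃ f : ℚ → L, StrictMono f ∧ ∀ q, f q ∈ (Set.univ : Set L)) :
    (∃ g : lam.ord.ToType → L, StrictMono g) ∨
    (∃ g : lam.ord.ToType → L, StrictAnti g) := by
  classical
  by_contra hcon
  push_neg at hcon
  obtain ⟨hLr, hRr⟩ := hcon
  have hLr' : ¬ ∃ g : lam.ord.ToType → L, StrictMono g := by
    rintro ⟨g, hg⟩; exact hLr g hg
  have hRr' : ¬ ∃ g : lam.ord.ToType → L, StrictAnti g := by
    rintro ⟨g, hg⟩; exact hRr g hg
  have hsplit := exists_split_point lam hreg L hLr' hRr'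
  have hne : Nonempty L := by
    rw [← Cardinal.mk_ne_zero_iff]
    exact ((Cardinal.aleph0_pos.trans_le (hreg.aleph0_le.trans hcard)).ne')
  -- split point picker
  let pick : Set L → L := fun A =>
    if h : lam ≤ #A then (hsplit A h).choose else Classical.arbitrary L
  have pickSpec : ∀ A : Set L, lam ≤ #A →
      pick A ∈ A ∧ lam ≤ #(A ∩ Iio (pick A) : Set L) ∧ lam ≤ #(A ∩ Ioi (pick A) : Set L) := by
    intro A h
    have := (hsplit A h).choose_spec
    simpa only [pick, dif_pos h] using this
  -- the binary tree of big sets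
  let C : List Bool → Set L := fun s =>
    List.rec Set.univ (fun b _ ih => ih ∩ (if b then Ioi (pick ih) else Iio (pick ih))) s
  have Ccons : ∀ (b) (s), C (b :: s) = C s ∩ (if b then Ioi (pick (C s)) else Iio (pick (C s))) :=
    fun _ _ => rfl
  have big : ∀ s, lam ≤ Cardinal.mk (↥(C s)) := by
    intro s
    induction s with
    | nil => rw [show C [] = Set.univ from rfl, mk_univ]; exact hcard
    | cons b s ih =>
      obtain ⟨-, h1, h2⟩ := pickSpec (C s) ih
      rw [Ccons]
      cases b
      · simpa using h1
      · simpa using h2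
  set x : List Bool → L := fun s => pick (C s) with hxdef
  have xmem : ∀ s, x s ∈ C s := fun s => (pickSpec (C s) (big s)).1
  have Csub : ∀ (b) (s), C (b :: s) ⊆ C s := by
    intro b s; rw [Ccons]; exact inter_subset_left
  have Cmono : ∀ (u) (s), C (u ++ s) ⊆ C s := by
    intro u s
    induction u with
    | nil => exact subset_rfl
    | cons a u ih => exact (Csub a (u ++ s)).trans ih
  have CsideT : ∀ s, C (true :: s) ⊆ Ioi (x s) := by
    intro s; rw [Ccons]; simp; exact inter_subset_right
  have CsideF : ∀ s, C (false :: s) ⊆ Iio (x s) := by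
    intro s; rw [Ccons]; simp; exact inter_subset_right
  have keyGT : ∀ (u) (s), x s < x (u ++ true :: s) :=
    fun u s => CsideT s (Cmono u (true :: s) (xmem (u ++ true :: s)))
  have keyLT : ∀ (u) (s), x (u ++ false :: s) < x s :=
    fun u s => CsideF s (Cmono u (false :: s) (xmem (u ++ false :: s)))
  set X : Set L := Set.range x with hXdef
  have memX : ∀ s, x s ∈ X := fun s => by rw [hXdef]; exact Set.mem_range_self _
  have dense3 : ∀ p q : ↥X, p < q → ∃ m : ↥X, p < m ∧ m < q := by
    rintro ⟨p, s, rfl⟩ ⟨q, t, rfl⟩ hpq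
    have hpq' : x s < x t := hpq
    rcases list_suffix_tricho s t with rfl | ⟨u, b, rfl⟩ | ⟨u, b, rfl⟩ |
        ⟨r, a, b, u, v, hab, rfl, rfl⟩
    · exact absurd hpq' (lt_irrefl _)
    · -- t = u ++ b :: s
      cases b
      · exact absurd (keyLT u s) (lt_asymm hpq')
      · refine ⟨⟨x (false :: (u ++ true :: s)), memX (false :: (u ++ true :: s))⟩, ?_, ?_⟩
        · show x s < x (false :: (u ++ true :: s))
          exact CsideT s (Cmono u (true :: s)
            (Csub false (u ++ true :: s) (xmem (false :: (u ++ true :: s)))))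
        · exact keyLT [] (u ++ true :: s)
    · -- s = u ++ b :: t
      cases b
      · refine ⟨⟨x (true :: (u ++ false :: t)), memX (true :: (u ++ false :: t))⟩, ?_, ?_⟩
        · exact keyGT [] (u ++ false :: t)
        · show x (true :: (u ++ false :: t)) < x t
          exact CsideF t (Cmono u (false :: t)
            (Csub true (u ++ false :: t) (xmem (true :: (u ++ false :: t)))))
      · exact absurd (keyGT u t) (lt_asymm hpq')
    · -- divergent
      cases a
      · cases b
        · exact absurd rfl hab
        · exact ⟨⟨x r, memX r⟩, keyLT u r, keyGT v r⟩
      · cases b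
        · exact absurd (lt_trans (keyLT v r) (keyGT u r)) (lt_asymm hpq')
        · exact absurd rfl hab
  haveI : Countable ↥X := (Set.countable_range x).to_subtype
  haveI : DenselyOrdered ↥X := ⟨dense3⟩
  haveI : Nontrivial ↥X := by
    refine ⟨⟨x [], memX []⟩, ⟨x [true], memX [true]⟩, ?_⟩
    have : x [] < x [true] := keyGT [] []
    exact fun h => absurd (Subtype.ext_iff.1 h) this.ne
  obtain ⟨f⟩ := Order.embedding_from_countable_to_dense (α := ℚ) (β := ↥X)
  exact hscat ⟨fun q => (f q : L), fun a b h => f.strictMono h, fun q => mem_univ _⟩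

/-- If `lam` is an infinite regular cardinal and `L` is a scattered linear order of
cardinality at least `lam`, then `lam` or its reverse embeds into `L`. -/
theorem scattered_embeds_lambda_or_reverse (lam : Cardinal.{u}) (hreg : lam.IsRegular)
    (L : Type u) [LinearOrder L] (hcard : lam ≤ #L)
    (hscat : IsScatteredSet (Set.univ : Set L)) :
    (∃ g : lam.ord.ToType → L, StrictMono g) ∨
    (∃ g : lam.ord.ToType → L, StrictAnti g) := by
  exact main_thm lam hreg L hcard hscat
end
end

section
/- Let λ be a regular uncountable cardinal and let L be a σ-scattered linear order with |L| ≥ λ. Then at least one of λ and λ* (the reverse order of λ) embeds into L. -/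
open Cardinal Set

universe u v

noncomputable section

section AuxLemmas

attribute [-instance] Quotient.instPreorder

private lemma auxIcc {L : Type*} [LinearOrder L] (a b c : L) :
    Icc (a ⊓ c) (a ⊔ c) ⊆ Icc (a ⊓ b) (a ⊔ b) ∪ Icc (b ⊓ c) (b ⊔ c) := by
  rintro x ⟨h1, h2⟩
  rw [inf_le_iff] at h1
  rw [le_sup_iff] at h2
  rcases le_total x b with hxb | hbx
  · rcases h1 with h | h
    · exact Or.inl ⟨inf_le_iff.2 (Or.inl h), le_sup_iff.2 (Or.inr hxb)⟩
    · exact Or.inr ⟨inf_le_iff.2 (Or.inr h), le_sup_iff.2 (Or.inl hxb)⟩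
  · rcases h2 with h | h
    · exact Or.inl ⟨inf_le_iff.2 (Or.inr hbx), le_sup_iff.2 (Or.inl h)⟩
    · exact Or.inr ⟨inf_le_iff.2 (Or.inl hbx), le_sup_iff.2 (Or.inr h)⟩

private lemma exists_strictMono_aux (lam : Cardinal.{u}) (hreg : lam.IsRegular)
    {L : Type u} [LinearOrder L] (X : Set L) (hX : lam ≤ #X)
    (hsmall : ∀ b ∈ X, #(X ∩ Iic b : Set L) < lam) :
    ∃ g : lam.ord.ToType → L, StrictMono g := by
  classical
  have h0 : (0 : Cardinal) < lam := aleph0_pos.trans_le hreg.1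
  have hXne : Nonempty X := Cardinal.mk_ne_zero_iff.1 fun h => ((h ▸ hX).not_gt h0)
  obtain ⟨⟨x0, hx0⟩⟩ := hXne
  let f : lam.ord.ToType → L := WellFoundedLT.fix (motive := fun _ => L) fun i g =>
    if h : (X \ ⋃ (j : Iio i), Iic (g j.1 j.2)).Nonempty then h.some else x0
  have hfix : ∀ i, f i = if h : (X \ ⋃ (j : Iio i), Iic (f j.1)).Nonempty then h.some else x0 :=
    fun i => WellFoundedLT.fix_eq _ i
  have key : ∀ i, f i ∈ X ∧ ∀ j, j < i → f j < f i := by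
    intro i
    induction i using WellFoundedLT.induction with
    | ind i ih =>
      have hne : (X \ ⋃ (j : Iio i), Iic (f j.1)).Nonempty := by
        rw [nonempty_iff_ne_empty]
        intro hemp
        have hsub : X ⊆ ⋃ (j : Iio i), (X ∩ Iic (f j.1) : Set L) := by
          intro x hx
          have hx2 : x ∈ ⋃ (j : Iio i), Iic (f j.1) := by
            by_contra hx2
            have hmem : x ∈ X \ ⋃ (j : Iio i), Iic (f j.1) := ⟨hx, hx2⟩
            rw [hemp] at hmem
            exact hmem
          rw [mem_iUnion] at hx2
          obtain ⟨j, hxt⟩ := hx2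
          exact mem_iUnion.2 ⟨j, hx, hxt⟩
        have hlt : #(⋃ (j : Iio i), (X ∩ Iic (f j.1) : Set L) : Set L) < lam := by
          rw [card_iUnion_lt_iff_forall_of_isRegular hreg (mk_Iio_ord_toType i)]
          intro j
          exact hsmall _ (ih j.1 j.2).1
        exact ((hX.trans (mk_le_mk_of_subset hsub)).trans_lt hlt).false
      have hmem : f i ∈ X \ ⋃ (j : Iio i), Iic (f j.1) := by
        rw [hfix i, dif_pos hne]
        exact hne.some_mem
      refine ⟨hmem.1, fun j hj => ?_⟩
      have hji : f i ∉ Iic (f j) := fun hc => hmem.2 (mem_iUnion.2 ⟨⟨j, hj⟩, hc⟩)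
      exact not_le.1 hji
  exact ⟨f, fun a b h => (key b).2 a h⟩

private lemma exists_strictAnti_aux (lam : Cardinal.{u}) (hreg : lam.IsRegular)
    {L : Type u} [LinearOrder L] (X : Set L) (hX : lam ≤ #X)
    (hsmall : ∀ b ∈ X, #(X ∩ Ici b : Set L) < lam) :
    ∃ g : lam.ord.ToType → L, StrictAnti g := by
  obtain ⟨g, hg⟩ := exists_strictMono_aux lam hreg (L := Lᵒᵈ)
      (OrderDual.ofDual ⁻¹' X) hX (fun b hb => hsmall b hb)
  exact ⟨fun i => OrderDual.ofDual (g i), fun a b hab => hg hab⟩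

private lemma exists_rat_embedding (lam : Cardinal.{u}) (hreg : lam.IsRegular)
    (hunc : ℵ₀ < lam) {L : Type u} [LinearOrder L] (A : Set L) (hA : lam ≤ #A)
    (hmono : ∀ g : lam.ord.ToType → L, ¬ StrictMono g)
    (hanti : ∀ g : lam.ord.ToType → L, ¬ StrictAnti g) :
    ∃ f : ℚ → L, StrictMono f ∧ ∀ q, f q ∈ A := by
  classical
  let r : L → L → Prop := fun a b => #(A ∩ Icc (a ⊓ b) (a ⊔ b) : Set L) < lam
  have hrefl : ∀ a, r a a := by
    intro a
    have hsub : (A ∩ Icc (a ⊓ a) (a ⊔ a) : Set L) ⊆ {a} := by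
      rintro x ⟨-, hx1, hx2⟩
      simp only [inf_idem, sup_idem] at hx1 hx2
      exact le_antisymm hx2 hx1
    show #(A ∩ Icc (a ⊓ a) (a ⊔ a) : Set L) < lam
    calc #(A ∩ Icc (a ⊓ a) (a ⊔ a) : Set L) ≤ #({a} : Set L) := mk_le_mk_of_subset hsub
    _ = 1 := mk_singleton a
    _ < lam := one_lt_aleph0.trans hunc
  have hsymm : ∀ a b : L, r a b → r b a := by
    intro a b h
    show #(A ∩ Icc (b ⊓ a) (b ⊔ a) : Set L) < lam
    rw [inf_comm b a, sup_comm b a]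
    exact h
  have htrans : ∀ a b c : L, r a b → r b c → r a c := by
    intro a b c h1 h2
    have hsub : (A ∩ Icc (a ⊓ c) (a ⊔ c) : Set L) ⊆
        (A ∩ Icc (a ⊓ b) (a ⊔ b)) ∪ (A ∩ Icc (b ⊓ c) (b ⊔ c)) := by
      rintro x ⟨hxA, hx⟩
      rcases auxIcc a b c hx with h | h
      · exact Or.inl ⟨hxA, h⟩
      · exact Or.inr ⟨hxA, h⟩
    show #(A ∩ Icc (a ⊓ c) (a ⊔ c) : Set L) < lam
    exact lt_of_le_of_lt (le_trans (mk_le_mk_of_subset hsub) (mk_union_le _ _))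
      (add_lt_of_lt hreg.1 h1 h2)
  have hconv : ∀ a b c : L, a ≤ b → b ≤ c → r a c → r a b ∧ r b c := by
    intro a b c hab hbc h
    have hac : a ≤ c := hab.trans hbc
    have e1 : Icc (a ⊓ b) (a ⊔ b) ⊆ Icc (a ⊓ c) (a ⊔ c) := by
      rw [inf_eq_left.2 hab, sup_eq_right.2 hab, inf_eq_left.2 hac, sup_eq_right.2 hac]
      exact Icc_subset_Icc le_rfl hbc
    have e2 : Icc (b ⊓ c) (b ⊔ c) ⊆ Icc (a ⊓ c) (a ⊔ c) := by
      rw [inf_eq_left.2 hbc, sup_eq_right.2 hbc, inf_eq_left.2 hac, sup_eq_right.2 hac]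
      exact Icc_subset_Icc hab le_rfl
    constructor
    · exact lt_of_le_of_lt (mk_le_mk_of_subset (inter_subset_inter Subset.rfl e1)) h
    · exact lt_of_le_of_lt (mk_le_mk_of_subset (inter_subset_inter Subset.rfl e2)) h
  -- each equivalence class is small
  have hclass : ∀ a : L, #({b | b ∈ A ∧ r a b} : Set L) < lam := by
    intro a
    have hup : #({b | b ∈ A ∧ a ≤ b ∧ #(A ∩ Icc a b : Set L) < lam} : Set L) < lam := by
      by_contra hbig
      push_neg at hbig
      have hsm : ∀ b ∈ ({b | b ∈ A ∧ a ≤ b ∧ #(A ∩ Icc a b : Set L) < lam} : Set L),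
          #(({b | b ∈ A ∧ a ≤ b ∧ #(A ∩ Icc a b : Set L) < lam} ∩ Iic b : Set L)) < lam := by
        intro b hb
        obtain ⟨hbA, hab, hcard⟩ := hb
        refine lt_of_le_of_lt (mk_le_mk_of_subset ?_) hcard
        rintro x ⟨⟨hxA, hax, -⟩, hxb⟩
        exact ⟨hxA, hax, hxb⟩
      obtain ⟨g, hg⟩ := exists_strictMono_aux lam hreg _ hbig hsm
      exact hmono g hg
    have hdown : #({b | b ∈ A ∧ b ≤ a ∧ #(A ∩ Icc b a : Set L) < lam} : Set L) < lam := by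
      by_contra hbig
      push_neg at hbig
      have hsm : ∀ b ∈ ({b | b ∈ A ∧ b ≤ a ∧ #(A ∩ Icc b a : Set L) < lam} : Set L),
          #(({b | b ∈ A ∧ b ≤ a ∧ #(A ∩ Icc b a : Set L) < lam} ∩ Ici b : Set L)) < lam := by
        intro b hb
        obtain ⟨hbA, hba, hcard⟩ := hb
        refine lt_of_le_of_lt (mk_le_mk_of_subset ?_) hcard
        rintro x ⟨⟨hxA, hxa, -⟩, hbx⟩
        exact ⟨hxA, hbx, hxa⟩
      obtain ⟨g, hg⟩ := exists_strictAnti_aux lam hreg _ hbig hsm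
      exact hanti g hg
    have hsub : ({b | b ∈ A ∧ r a b} : Set L) ⊆
        ({b | b ∈ A ∧ a ≤ b ∧ #(A ∩ Icc a b : Set L) < lam} : Set L) ∪
        ({b | b ∈ A ∧ b ≤ a ∧ #(A ∩ Icc b a : Set L) < lam} : Set L) := by
      rintro b ⟨hbA, hrb⟩
      rcases le_total a b with hab | hba
      · left
        refine ⟨hbA, hab, ?_⟩
        have : #(A ∩ Icc (a ⊓ b) (a ⊔ b) : Set L) < lam := hrb
        rwa [inf_eq_left.2 hab, sup_eq_right.2 hab] at this
      · right
        refine ⟨hbA, hba, ?_⟩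
        have : #(A ∩ Icc (a ⊓ b) (a ⊔ b) : Set L) < lam := hrb
        rwa [inf_eq_right.2 hba, sup_eq_left.2 hba] at this
    exact lt_of_le_of_lt (le_trans (mk_le_mk_of_subset hsub) (mk_union_le _ _))
      (add_lt_of_lt hreg.1 hup hdown)
  -- density
  have hdense : ∀ a ∈ A, ∀ c ∈ A, a < c → ¬ r a c →
      ∃ b ∈ A, a < b ∧ b < c ∧ ¬ r a b ∧ ¬ r b c := by
    intro a ha c hc hac hrac
    have hM : lam ≤ #(A ∩ Icc a c : Set L) := by
      by_contra hlt
      push_neg at hlt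
      apply hrac
      show #(A ∩ Icc (a ⊓ c) (a ⊔ c) : Set L) < lam
      rwa [inf_eq_left.2 hac.le, sup_eq_right.2 hac.le]
    have hBad : #((({b | b ∈ A ∧ r a b} ∪ {b | b ∈ A ∧ r c b}) ∪ {a, c}) : Set L) < lam := by
      refine lt_of_le_of_lt (mk_union_le _ _) (add_lt_of_lt hreg.1 ?_ ?_)
      · exact lt_of_le_of_lt (mk_union_le _ _) (add_lt_of_lt hreg.1 (hclass a) (hclass c))
      · exact ((Set.toFinite ({a, c} : Set L)).lt_aleph0).trans hunc
    obtain ⟨b, hbM, hbBad⟩ : ∃ b, b ∈ (A ∩ Icc a c : Set L) ∧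
        b ∉ ((({b | b ∈ A ∧ r a b} ∪ {b | b ∈ A ∧ r c b}) ∪ {a, c}) : Set L) := by
      by_contra hcon2
      push_neg at hcon2
      exact absurd (hM.trans (mk_le_mk_of_subset fun x hx => hcon2 x hx)) hBad.not_ge
    obtain ⟨hbA, hab, hbc⟩ := hbM
    simp only [mem_union, mem_setOf_eq, mem_insert_iff, mem_singleton_iff, not_or] at hbBad
    obtain ⟨⟨hn1, hn2⟩, hne1, hne2⟩ := hbBad
    refine ⟨b, hbA, lt_of_le_of_ne hab (Ne.symm hne1), lt_of_le_of_ne hbc hne2,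
      fun h => hn1 ⟨hbA, h⟩, fun h => hn2 ⟨hbA, hsymm b c h⟩⟩
  -- a non-equivalent pair
  have h0 : (0 : Cardinal) < lam := aleph0_pos.trans_le hreg.1
  have hAne : Nonempty A := Cardinal.mk_ne_zero_iff.1 fun h => ((h ▸ hA).not_gt h0)
  obtain ⟨⟨a0, ha0⟩⟩ := hAne
  obtain ⟨b0, hb0A, hb0⟩ : ∃ b, b ∈ A ∧ ¬ r a0 b := by
    by_contra h
    push_neg at h
    have hsub : A ⊆ ({b | b ∈ A ∧ r a0 b} : Set L) := fun b hb => ⟨hb, h b hb⟩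
    exact absurd (hA.trans (mk_le_mk_of_subset hsub)) (hclass a0).not_ge
  have hne0 : a0 ≠ b0 := fun h => hb0 (h ▸ hrefl a0)
  obtain ⟨p, q, hpA, hqA, hpq, hrpq⟩ :
      ∃ p q : L, p ∈ A ∧ q ∈ A ∧ p < q ∧ ¬ r p q := by
    rcases hne0.lt_or_gt with h | h
    · exact ⟨a0, b0, ha0, hb0A, h, hb0⟩
    · exact ⟨b0, a0, hb0A, ha0, h, fun hh => hb0 (hsymm _ _ hh)⟩
  -- the quotient order
  let s : Setoid (↥A) := ⟨fun x y => r x.1 y.1,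
    ⟨fun x => hrefl x.1, fun {x y} h => hsymm x.1 y.1 h,
      fun {x y z} h1 h2 => htrans x.1 y.1 z.1 h1 h2⟩⟩
  have wd1 : ∀ x1 y1 x2 y2 : ↥A, r x1.1 x2.1 → r y1.1 y2.1 → x1.1 < y1.1 → ¬ r x1.1 y1.1 →
      x2.1 < y2.1 ∧ ¬ r x2.1 y2.1 := by
    intro x1 y1 x2 y2 hx hy hlt hnr
    have hnr2 : ¬ r x2.1 y2.1 := fun h =>
      hnr (htrans _ _ _ hx (htrans _ _ _ h (hsymm _ _ hy)))
    refine ⟨?_, hnr2⟩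
    by_contra hle
    push_neg at hle
    rcases le_total y1.1 x2.1 with h | h
    · exact hnr (hconv _ _ _ hlt.le h hx).1
    · exact hnr (htrans _ _ _ hx (hconv _ _ _ hle h (hsymm _ _ hy)).2)
  let rlt : Quotient s → Quotient s → Prop :=
    Quotient.lift₂ (fun x y : ↥A => x.1 < y.1 ∧ ¬ r x.1 y.1)
      (by
        intro a b a' b' ha hb
        exact propext ⟨fun ⟨u, v⟩ => wd1 a b a' b' ha hb u v,
          fun ⟨u, v⟩ => wd1 a' b' a b (hsymm _ _ ha) (hsymm _ _ hb) u v⟩)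
  have hmk : ∀ a b : ↥A, rlt (Quotient.mk s a) (Quotient.mk s b) ↔
      (a.1 < b.1 ∧ ¬ r a.1 b.1) := fun a b => Iff.rfl
  haveI : IsTrichotomous (Quotient s) rlt := ⟨by
    intro x y
    refine Quotient.inductionOn₂ x y fun a b => ?_
    intro hab hba
    by_cases hr1 : r a.1 b.1
    · exact Quotient.sound hr1
    · rcases lt_trichotomy a.1 b.1 with h | h | h
      · exact absurd ((hmk a b).2 ⟨h, hr1⟩) hab
      · exact absurd (by rw [← h] at hr1 ⊢; exact hrefl a.1) hr1
      · exact absurd ((hmk b a).2 ⟨h, fun hh => hr1 (hsymm _ _ hh)⟩) hba⟩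
  haveI : IsTrans (Quotient s) rlt := ⟨by
    intro x y z
    refine Quotient.inductionOn₃ x y z fun a b c h1 h2 => ?_
    obtain ⟨h1, h2'⟩ := (hmk a b).1 h1
    obtain ⟨h3, h4⟩ := (hmk b c).1 h2
    exact (hmk a c).2 ⟨h1.trans h3, fun h => h2' (hconv _ _ _ h1.le h3.le h).1⟩⟩
  haveI : IsIrrefl (Quotient s) rlt := ⟨by
    intro x
    refine Quotient.inductionOn x fun a h => ?_
    exact lt_irrefl _ ((hmk a a).1 h).1⟩
  haveI : IsStrictOrder (Quotient s) rlt := { }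
  haveI : IsStrictTotalOrder (Quotient s) rlt := { }
  letI : LinearOrder (Quotient s) := linearOrderOfSTO rlt
  have hlt_iff : ∀ x y : Quotient s, x < y ↔ rlt x y := fun x y => Iff.rfl
  haveI : DenselyOrdered (Quotient s) := ⟨by
    intro x y h
    revert h
    refine Quotient.inductionOn₂ x y fun a b h => ?_
    obtain ⟨h1, h2⟩ := (hmk a b).1 ((hlt_iff _ _).1 h)
    obtain ⟨m, hmA, hm1, hm2, hm3, hm4⟩ := hdense a.1 a.2 b.1 b.2 h1 h2
    exact ⟨Quotient.mk s ⟨m, hmA⟩, (hlt_iff _ _).2 ((hmk a ⟨m, hmA⟩).2 ⟨hm1, hm3⟩),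
      (hlt_iff _ _).2 ((hmk ⟨m, hmA⟩ b).2 ⟨hm2, hm4⟩)⟩⟩
  haveI : Nontrivial (Quotient s) :=
    ⟨⟨Quotient.mk s ⟨p, hpA⟩, Quotient.mk s ⟨q, hqA⟩,
      fun h => hrpq (Quotient.exact h)⟩⟩
  obtain ⟨e⟩ := Order.embedding_from_countable_to_dense (α := ℚ) (β := Quotient s)
  refine ⟨fun q => ((e q).out).1, ?_, fun q => ((e q).out).2⟩
  intro q1 q2 hq
  have he : rlt (e q1) (e q2) := (hlt_iff _ _).1 (e.lt_iff_lt.2 hq)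
  have h2 : rlt (Quotient.mk s (e q1).out) (Quotient.mk s (e q2).out) := by
    rwa [Quotient.out_eq, Quotient.out_eq]
  exact ((hmk _ _).1 h2).1
end AuxLemmas

/-- If `lam` is a regular uncountable cardinal and `L` is a σ-scattered linear order of
cardinality at least `lam`, then `lam` or its reverse embeds into `L`. -/
theorem sigmaScattered_embeds_lambda_or_reverse (lam : Cardinal.{u}) (hreg : lam.IsRegular)
    (hunc : ℵ₀ < lam) (L : Type u) [LinearOrder L] (hcard : lam ≤ #L)
    (hscat : IsSigmaScatteredSet (Set.univ : Set L)) :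
    (∃ g : lam.ord.ToType → L, StrictMono g) ∨
    (∃ g : lam.ord.ToType → L, StrictAnti g) := by
  by_contra hcon
  push_neg at hcon
  obtain ⟨h1, h2⟩ := hcon
  obtain ⟨S, hSU, hSsc⟩ := hscat
  obtain ⟨n, hn⟩ : ∃ n, lam ≤ #(S n) := by
    by_contra hall
    push_neg at hall
    have hu : #(⋃ (m : ULift.{u} ℕ), S m.down : Set L) < lam := by
      refine (card_iUnion_lt_iff_forall_of_isRegular hreg ?_).2 fun m => hall m.down
      rw [mk_denumerable]
      exact hunc
    have heq : (⋃ (m : ULift.{u} ℕ), S m.down) = ⋃ m, S m := by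
      ext x
      simp only [mem_iUnion]
      exact ⟨fun ⟨m, h⟩ => ⟨m.down, h⟩, fun ⟨m, h⟩ => ⟨⟨m⟩, h⟩⟩
    rw [heq, hSU] at hu
    rw [mk_univ] at hu
    exact hu.not_ge hcard
  obtain ⟨f, hf1, hf2⟩ := exists_rat_embedding lam hreg hunc (S n) hn h1 h2
  exact hSsc n ⟨f, hf1, hf2⟩
end
end

section
/- Let κ be an infinite cardinal and let L be a linear order with |L| ≥ κ⁺ and density κ. Then L is not σ-scattered. -/
open Cardinal Set

universe u v

noncomputable section

lemma no_long_chain {M : Type u} [LinearOrder M] {κ : Cardinal.{u}} (hκ : ℵ₀ ≤ κ)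
    {D : Set M} (hD : #D ≤ κ) (hdense : WeaklyDenseIn D Set.univ)
    (f : (Order.succ κ).ord.ToType → M) (hf : StrictMono f) : False := by
  classical
  haveI instWO : IsWellOrder (Order.succ κ).ord.ToType (· < ·) := isWellOrder_lt
  have holim : Order.IsSuccLimit (Order.succ κ).ord := Cardinal.isSuccLimit_ord (hκ.trans (Order.le_succ κ))
  -- successor function on the index order
  have hsucc : ∀ α : (Order.succ κ).ord.ToType, ∃ σ : (Order.succ κ).ord.ToType,
      α < σ ∧ ∀ γ : (Order.succ κ).ord.ToType, α < γ → σ ≤ γ := by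
    intro α
    have h1 : Ordinal.typein (α := (Order.succ κ).ord.ToType) (· < ·) α < (Order.succ κ).ord :=
      Ordinal.typein_lt_self α
    have h2 : Order.succ (Ordinal.typein (α := (Order.succ κ).ord.ToType) (· < ·) α) <
        Ordinal.type (α := (Order.succ κ).ord.ToType) (· < ·) := by
      rw [Ordinal.type_toType]; exact holim.succ_lt h1
    refine ⟨Ordinal.enum (· < ·) ⟨_, Set.mem_Iio.2 h2⟩, ?_, ?_⟩
    · have h3 : Ordinal.typein (α := (Order.succ κ).ord.ToType) (· < ·) α <
          Ordinal.typein (α := (Order.succ κ).ord.ToType) (· < ·)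
            (Ordinal.enum (· < ·) ⟨_, Set.mem_Iio.2 h2⟩) := by
        erw [Ordinal.typein_enum]; exact Order.lt_succ _
      exact (Ordinal.typein_lt_typein (· < ·)).1 h3
    · intro γ hγ
      by_contra hcon
      have h4 : Ordinal.typein (α := (Order.succ κ).ord.ToType) (· < ·) γ <
          Ordinal.typein (α := (Order.succ κ).ord.ToType) (· < ·)
            (Ordinal.enum (· < ·) ⟨_, Set.mem_Iio.2 h2⟩) :=
        (Ordinal.typein_lt_typein (· < ·)).2 (not_le.1 hcon)
      erw [Ordinal.typein_enum] at h4
      have h5 : Ordinal.typein (α := (Order.succ κ).ord.ToType) (· < ·) α <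
          Ordinal.typein (α := (Order.succ κ).ord.ToType) (· < ·) γ :=
        (Ordinal.typein_lt_typein (· < ·)).2 hγ
      exact (Order.succ_le_of_lt h5).not_gt h4
  choose σ hσ1 hσ2 using hsucc
  choose d hdD hd1 hd2 using fun α : (Order.succ κ).ord.ToType =>
    hdense (f α) (mem_univ _) (f (σ α)) (mem_univ _) (hf (hσ1 α))
  have three : ∀ γ α α' : (Order.succ κ).ord.ToType,
      γ < α → α < α' → d γ = d α' → False := by
    intro γ α α' h1 h2 he
    have c1 : d γ ≤ f α := (hd2 γ).trans (hf.monotone (hσ2 γ α h1))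
    have c2 : f α < f (σ α) := hf (hσ1 α)
    have c3 : f (σ α) ≤ f α' := hf.monotone (hσ2 α α' h2)
    have c4 : f α' ≤ d α' := hd1 α'
    exact absurd (he ▸ (((c1.trans_lt c2).trans_le c3).trans_le c4)) (lt_irrefl _)
  -- injection into D ⊕ D
  let g : (Order.succ κ).ord.ToType → ↥D ⊕ ↥D := fun α =>
    if ∃ γ, γ < α ∧ d γ = d α then Sum.inl ⟨d α, hdD α⟩ else Sum.inr ⟨d α, hdD α⟩
  have hkey : ∀ a b : (Order.succ κ).ord.ToType, a < b → g a = g b → False := by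
    intro a b hab heq
    by_cases ha : ∃ γ, γ < a ∧ d γ = d a <;> by_cases hb : ∃ γ, γ < b ∧ d γ = d b <;>
      simp only [g, if_pos, if_neg, ha, hb, if_true, if_false,
        Sum.inl.injEq, Sum.inr.injEq, Subtype.mk.injEq, reduceCtorEq] at heq
    · obtain ⟨γ, hγ, hγd⟩ := ha
      exact three γ a b hγ hab (hγd.trans heq)
    · exact hb ⟨a, hab, heq⟩
  have hginj : Function.Injective g := by
    intro a b heq
    rcases lt_trichotomy a b with h | h | h
    · exact absurd heq fun he => hkey a b h he
    · exact h
    · exact absurd heq.symm fun he => hkey b a h he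
  have hle : #(Order.succ κ).ord.ToType ≤ #(↥D ⊕ ↥D) := Cardinal.mk_le_of_injective hginj
  rw [Cardinal.mk_toType, Cardinal.card_ord] at hle
  have hDD : #(↥D ⊕ ↥D) ≤ κ := by
    simp only [Cardinal.mk_sum, Cardinal.lift_id]
    calc #↥D + #↥D ≤ κ + κ := add_le_add hD hD
      _ = κ := Cardinal.add_eq_self hκ
  exact absurd (hle.trans hDD) (Order.lt_succ κ).not_ge

/-- A subset all of whose initial segments have size ≤ κ has size ≤ κ
(in a linear order with a weakly dense set of size ≤ κ). -/
lemma chainBound {M : Type u} [LinearOrder M] {κ : Cardinal.{u}} (hκ : ℵ₀ ≤ κ)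
    {D : Set M} (hD : #D ≤ κ) (hdense : WeaklyDenseIn D Set.univ)
    (B : Set M) (hB : ∀ x ∈ B, #{y : M | y ∈ B ∧ y ≤ x} ≤ κ) : #B ≤ κ := by
  classical
  haveI instWO : IsWellOrder (Order.succ κ).ord.ToType (· < ·) := isWellOrder_lt
  by_contra hlt
  have hBne : B.Nonempty := by
    rcases Set.eq_empty_or_nonempty B with rfl | h
    · exact absurd (by simp : #(∅ : Set M) ≤ κ) hlt
    · exact h
  have hIio : ∀ α : (Order.succ κ).ord.ToType, #(Set.Iio α) ≤ κ := by
    intro α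
    have h1 : (Ordinal.typein (α := (Order.succ κ).ord.ToType) (· < ·) α).card < Order.succ κ :=
      Cardinal.lt_ord.1 (Ordinal.typein_lt_self α)
    have h2 : #{y : (Order.succ κ).ord.ToType // y < α} =
        (Ordinal.typein (α := (Order.succ κ).ord.ToType) (· < ·) α).card :=
      (Ordinal.card_typein _).symm
    have h3 : #(Set.Iio α) = #{y : (Order.succ κ).ord.ToType // y < α} := rfl
    rw [h3, h2]
    exact Order.lt_succ_iff.1 h1
  have wf : WellFounded ((· < ·) : (Order.succ κ).ord.ToType → (Order.succ κ).ord.ToType → Prop) :=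
    instWO.wf
  let f : (Order.succ κ).ord.ToType → M := wf.fix (fun α ih =>
    if h : ∃ x, x ∈ B ∧ ∀ β (hb : β < α), ih β hb < x then h.choose else hBne.choose)
  have hfeq : ∀ α, f α =
      if h : ∃ x, x ∈ B ∧ ∀ β (_ : β < α), f β < x then h.choose else hBne.choose :=
    fun α => wf.fix_eq _ α
  have key : ∀ α, f α ∈ B ∧ ∀ β, β < α → f β < f α := by
    intro α
    refine wf.induction (C := fun α => f α ∈ B ∧ ∀ β, β < α → f β < f α) α (fun γ IH => ?_)
    have hex : ∃ x, x ∈ B ∧ ∀ β (_ : β < γ), f β < x := by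
      have hsub : {x | x ∈ B ∧ ∃ β, ∃ _ : β < γ, x ≤ f β} ⊆
          ⋃ β : Set.Iio γ, {x | x ∈ B ∧ x ≤ f β.1} := by
        rintro x ⟨hxB, β, hβ, hxle⟩
        exact Set.mem_iUnion.2 ⟨⟨β, hβ⟩, hxB, hxle⟩
      have hcard : #{x | x ∈ B ∧ ∃ β, ∃ _ : β < γ, x ≤ f β} ≤ κ := by
        refine (Cardinal.mk_le_mk_of_subset hsub).trans ((Cardinal.mk_iUnion_le _).trans ?_)
        have h1 : ⨆ β : Set.Iio γ, #{x | x ∈ B ∧ x ≤ f β.1} ≤ κ :=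
          ciSup_le' fun β => hB (f β.1) (IH β.1 β.2).1
        calc #(Set.Iio γ) * ⨆ β : Set.Iio γ, #{x | x ∈ B ∧ x ≤ f β.1} ≤ κ * κ :=
              mul_le_mul' (hIio γ) h1
          _ = κ := Cardinal.mul_eq_self hκ
      have hnsub : ¬ B ⊆ {x | x ∈ B ∧ ∃ β, ∃ _ : β < γ, x ≤ f β} := by
        intro hsub'
        exact hlt ((Cardinal.mk_le_mk_of_subset hsub').trans hcard)
      obtain ⟨x, hxB, hxn⟩ := Set.not_subset.1 hnsub
      refine ⟨x, hxB, fun β hb => ?_⟩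
      by_contra hle
      exact hxn ⟨hxB, β, hb, not_lt.1 hle⟩
    have hfγ : f γ = hex.choose := by rw [hfeq γ]; exact dif_pos hex
    show f γ ∈ B ∧ ∀ β, β < γ → f β < f γ
    rw [hfγ]
    exact ⟨hex.choose_spec.1, fun β hb => hex.choose_spec.2 β hb⟩
  exact no_long_chain hκ hD hdense f (fun a b h => (key b).2 a h)

lemma WeaklyDenseIn.dual {M : Type u} [LinearOrder M] {D : Set M}
    (h : WeaklyDenseIn D Set.univ) :
    WeaklyDenseIn (OrderDual.ofDual ⁻¹' D) (Set.univ : Set Mᵒᵈ) := by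
  intro a _ c _ hlt
  obtain ⟨b, hbD, h1, h2⟩ :=
    h (OrderDual.ofDual c) (mem_univ _) (OrderDual.ofDual a) (mem_univ _) hlt
  exact ⟨OrderDual.toDual b, hbD, h2, h1⟩

theorem auxMain_density_not_sigmaScattered (κ : Cardinal.{u}) (hκ : ℵ₀ ≤ κ)
    (L : Type u) [LinearOrder L] (hcard : Order.succ κ ≤ #L)
    (hdens : ∃ D : Set L, #D = κ ∧ WeaklyDenseIn D Set.univ)
    (hs : ∃ S : ℕ → Set L, (⋃ n, S n) = (Set.univ : Set L) ∧
      ∀ n, ¬ ∃ f : ℚ → L, StrictMono f ∧ ∀ q, f q ∈ S n) : False := by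
  classical
  obtain ⟨S, hUnion, hScat⟩ := hs
  obtain ⟨D, hDcard, hdense⟩ := hdens
  have hD : #D ≤ κ := le_of_eq hDcard
  -- pigeonhole: some S n has size > κ
  have hex : ∃ n, ¬ #(S n) ≤ κ := by
    by_contra hall
    push_neg at hall
    have hre : (⋃ n, S n) = ⋃ n : ULift.{u} ℕ, S n.down := by
      ext x
      simp only [Set.mem_iUnion]
      exact ⟨fun ⟨i, h⟩ => ⟨⟨i⟩, h⟩, fun ⟨i, h⟩ => ⟨i.down, h⟩⟩
    have h1 : #L ≤ κ := by
      calc #L = #(Set.univ : Set L) := Cardinal.mk_univ.symm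
        _ = #(⋃ n, S n) := by rw [hUnion]
        _ = #(⋃ n : ULift.{u} ℕ, S n.down) := by rw [hre]
        _ ≤ #(ULift.{u} ℕ) * ⨆ n : ULift.{u} ℕ, #(S n.down) := Cardinal.mk_iUnion_le _
        _ ≤ κ * κ := mul_le_mul' (by rw [Cardinal.mk_denumerable]; exact hκ)
              (ciSup_le' fun n => hall n.down)
        _ = κ := Cardinal.mul_eq_self hκ
    exact absurd (hcard.trans h1) (Order.lt_succ κ).not_ge
  obtain ⟨n, hn⟩ := hex
  set A := S n with hA
  -- exceptional sets
  let Bl : L → Set L := fun e => {x | x ∈ A ∧ e ≤ x ∧ #{y : L | y ∈ A ∧ e ≤ y ∧ y ≤ x} ≤ κ}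
  let Br : L → Set L := fun e => {x | x ∈ A ∧ x ≤ e ∧ #{y : L | y ∈ A ∧ x ≤ y ∧ y ≤ e} ≤ κ}
  have hBl : ∀ e : L, #(Bl e) ≤ κ := by
    intro e
    refine chainBound hκ hD hdense (Bl e) ?_
    intro x hx
    refine le_trans (Cardinal.mk_le_mk_of_subset ?_) hx.2.2
    rintro y ⟨⟨hyA, hey, _⟩, hyx⟩
    exact ⟨hyA, hey, hyx⟩
  have hBr : ∀ e : L, #(Br e) ≤ κ := by
    intro e
    have hdual : #(show Set Lᵒᵈ from Br e) ≤ κ := by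
      refine chainBound (M := Lᵒᵈ) hκ (D := OrderDual.ofDual ⁻¹' D) hD hdense.dual _ ?_
      rintro x ⟨hxA, hxe, hxsmall⟩
      refine le_trans (Cardinal.mk_le_mk_of_subset ?_) hxsmall
      rintro y ⟨⟨hyA, hye, _⟩, hxy⟩
      exact ⟨hyA, hxy, hye⟩
    exact hdual
  -- the union of the exceptional sets
  have hbad : #(⋃ e : ↥D, (Bl e.1 ∪ Br e.1)) ≤ κ := by
    refine (Cardinal.mk_iUnion_le _).trans ?_
    have h1 : ⨆ e : ↥D, #((Bl e.1 ∪ Br e.1 : Set L)) ≤ κ := by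
      refine ciSup_le' fun e => (Cardinal.mk_union_le _ _).trans ?_
      calc #(Bl e.1) + #(Br e.1) ≤ κ + κ := add_le_add (hBl e.1) (hBr e.1)
        _ = κ := Cardinal.add_eq_self hκ
    calc #↥D * ⨆ e : ↥D, #((Bl e.1 ∪ Br e.1 : Set L)) ≤ κ * κ := mul_le_mul' hD h1
      _ = κ := Cardinal.mul_eq_self hκ
  set bad : Set L := ⋃ e : ↥D, (Bl e.1 ∪ Br e.1) with hbaddef
  let T : Set L := {x | x ∈ A ∧ x ∉ bad}
  have hTbig : ¬ #T ≤ κ := by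
    intro hT
    apply hn
    have hsub : A ⊆ T ∪ bad := by
      intro x hx
      by_cases h : x ∈ bad
      · exact Or.inr h
      · exact Or.inl ⟨hx, h⟩
    calc #A ≤ #(T ∪ bad : Set L) := Cardinal.mk_le_mk_of_subset hsub
      _ ≤ #T + #bad := Cardinal.mk_union_le _ _
      _ ≤ κ + κ := add_le_add hT hbad
      _ = κ := Cardinal.add_eq_self hκ
  haveI hTnontriv : Nontrivial ↥T := by
    rw [← Cardinal.one_lt_iff_nontrivial]
    calc (1 : Cardinal) < ℵ₀ := Cardinal.one_lt_aleph0
      _ ≤ κ := hκ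
      _ < #T := not_le.1 hTbig
  haveI hTdense : DenselyOrdered ↥T := by
    constructor
    rintro ⟨a, haA, haBad⟩ ⟨b, hbA, hbBad⟩ hab
    have hab' : a < b := hab
    obtain ⟨dd, hdD, had, hdb⟩ := hdense a (mem_univ _) b (mem_univ _) hab'
    have hpair : #({a, b} : Set L) ≤ κ :=
      le_trans (((Set.finite_singleton b).insert a).lt_aleph0).le hκ
    have hbig : ¬ #{y : L | y ∈ A ∧ a < y ∧ y < b} ≤ κ := by
      intro hsm
      have hunion : #({y : L | y ∈ A ∧ a < y ∧ y < b} ∪ ({a, b} : Set L) : Set L) ≤ κ := by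
        refine (Cardinal.mk_union_le _ _).trans ?_
        calc #{y : L | y ∈ A ∧ a < y ∧ y < b} + #({a, b} : Set L) ≤ κ + κ := add_le_add hsm hpair
          _ = κ := Cardinal.add_eq_self hκ
      rcases lt_or_eq_of_le had with hlt | heq
      · -- a < dd : then a ∈ Br dd, contradiction with a ∉ bad
        apply haBad
        refine Set.mem_iUnion.2 ⟨⟨dd, hdD⟩, Or.inr ?_⟩
        refine ⟨haA, hlt.le, ?_⟩
        refine le_trans (Cardinal.mk_le_mk_of_subset ?_) hunion
        rintro y ⟨hyA, h1, h2'⟩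
        rcases eq_or_lt_of_le h1 with rfl | h1'
        · exact Or.inr (Set.mem_insert _ _)
        · rcases eq_or_lt_of_le (h2'.trans hdb) with h2'' | h2''
          · exact Or.inr (by rw [h2'']; exact Set.mem_insert_of_mem _ rfl)
          · exact Or.inl ⟨hyA, h1', h2''⟩
      · -- a = dd : then dd < b and b ∈ Bl dd
        apply hbBad
        refine Set.mem_iUnion.2 ⟨⟨dd, hdD⟩, Or.inl ?_⟩
        refine ⟨hbA, hdb, ?_⟩
        refine le_trans (Cardinal.mk_le_mk_of_subset ?_) hunion
        rintro y ⟨hyA, h1, h2'⟩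
        have h1a : a ≤ y := heq ▸ h1
        rcases eq_or_lt_of_le h1a with rfl | h1'
        · exact Or.inr (Set.mem_insert _ _)
        · rcases eq_or_lt_of_le h2' with h2'' | h2''
          · exact Or.inr (by rw [h2'']; exact Set.mem_insert_of_mem _ rfl)
          · exact Or.inl ⟨hyA, h1', h2''⟩
    have hns : ¬ {y : L | y ∈ A ∧ a < y ∧ y < b} ⊆ bad := fun hsub =>
      hbig ((Cardinal.mk_le_mk_of_subset hsub).trans hbad)
    obtain ⟨c, ⟨hcA, hac, hcb⟩, hcbad⟩ := Set.not_subset.1 hns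
    exact ⟨⟨c, hcA, hcbad⟩, hac, hcb⟩
  obtain ⟨g⟩ := Order.embedding_from_countable_to_dense (α := ℚ) (β := ↥T)
  refine hScat n ⟨fun q => ((g q : ↥T) : L), ?_, ?_⟩
  · intro q r h
    exact Subtype.coe_lt_coe.2 (g.lt_iff_lt.2 h)
  · intro q
    exact (g q).2.1

/-- If `κ` is an infinite cardinal and `L` is a linear order of cardinality at least `κ⁺`
with density `κ`, then `L` is not σ-scattered. -/
theorem density_implies_not_sigmaScattered (κ : Cardinal.{u}) (hκ : ℵ₀ ≤ κ)
    (L : Type u) [LinearOrder L] (hcard : Order.succ κ ≤ #L)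
    (hdens : ∃ D : Set L, #D = κ ∧ WeaklyDenseIn D Set.univ) :
    ¬ IsSigmaScatteredSet (Set.univ : Set L) := by
  rintro ⟨S, hUnion, hScat⟩
  exact auxMain_density_not_sigmaScattered κ hκ L hcard hdens ⟨S, hUnion, fun n => hScat n⟩
end
end

section
/- Let (f_α)_{α<κ⁺} be a weak scale of length κ⁺ in ∏_n λ_n such that every ordinal α < κ⁺ of uncountable cofinality is a better point. Then (f_α)_{α<κ⁺} is disjointing. -/
open Cardinal Set

universe u v

noncomputable section

/-- `β` is a good point of the sequence `f`: there are an unbounded `A ⊆ β` and `m < ω`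
such that `ξ ↦ f ξ n` is strictly increasing on `A` for all `n ≥ m`. -/
def IsGoodPt (f : Ordinal.{u} → ℕ → Ordinal.{v}) (β : Ordinal.{u}) : Prop :=
  ∃ A : Set Ordinal.{u}, (∀ ξ ∈ A, ξ < β) ∧ (∀ γ < β, ∃ ξ ∈ A, γ ≤ ξ) ∧
    ∃ m : ℕ, ∀ n, m ≤ n → StrictMonoOn (fun ξ => f ξ n) A

/-- `β` is a better point of the sequence `f`: there is a club `C ⊆ β` such that for every
limit point `γ` of `C` there is `m < ω` with `f ξ n < f γ n` for all `ξ ∈ C ∩ γ`, `n ≥ m`. -/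
def IsBetterPt (f : Ordinal.{u} → ℕ → Ordinal.{v}) (β : Ordinal.{u}) : Prop :=
  ∃ C : Set Ordinal.{u}, IsClubIn C β ∧
    ∀ γ ∈ limPts C, ∃ m : ℕ, ∀ ξ ∈ C ∩ Set.Iio γ, ∀ n, m ≤ n → f ξ n < f γ n

/-- `β` is a very good point of the sequence `f`: there are a club `C ⊆ β` and `m < ω`
such that `ξ ↦ f ξ n` is strictly increasing on `C` for all `n ≥ m`. -/
def IsVeryGoodPt (f : Ordinal.{u} → ℕ → Ordinal.{v}) (β : Ordinal.{u}) : Prop :=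
  ∃ C : Set Ordinal.{u}, IsClubIn C β ∧
    ∃ m : ℕ, ∀ n, m ≤ n → StrictMonoOn (fun ξ => f ξ n) C

open Classical in
/-- A uniform threshold beyond which `g n < h n`, when the exceptional set is finite. -/
noncomputable def thr (g h : ℕ → Ordinal.{u}) : ℕ :=
  if hf : ({n | ¬ g n < h n}).Finite then hf.toFinset.sup id + 1 else 0

theorem thr_spec {g h : ℕ → Ordinal.{u}} (hf : {n | ¬ g n < h n}.Finite) {n : ℕ}
    (hn : thr g h ≤ n) : g n < h n := by
  rw [thr, dif_pos hf] at hn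
  by_contra hc
  have h1 : n ∈ hf.toFinset := by simpa using hc
  have h2 := Finset.le_sup (f := id) h1
  simp only [id] at h2
  omega
/-- A weak scale of length `κ⁺` in `∏ n, lam n` in which every point of uncountable
cofinality is better is disjointing. -/
theorem better_weak_scale_is_disjointing (κ : Cardinal.{u})
    (hκ : ℵ₀ < κ) (hcof : κ.ord.cof = ℵ₀)
    (lam : ℕ → Ordinal.{u}) (hlam : ∀ n, lam n < κ.ord)
    (hlamcf : ∀ η < κ, {n | (lam n).cof < η}.Finite)
    (f : Ordinal.{u} → ℕ → Ordinal.{u})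
    (hscale : IsWeakScale κ lam (Order.succ κ).ord f)
    (hbetter : ∀ α < (Order.succ κ).ord, ℵ₀ < α.cof → IsBetterPt f α) :
    IsDisjointing (Order.succ κ).ord f := by
  obtain ⟨-, hinc, -, -⟩ := hscale
  suffices H : ∀ β, β < (Order.succ κ).ord → ∃ N : Ordinal.{u} → ℕ,
      ∀ α α', α < α' → α' < β → ∀ n, N α ≤ n → N α' ≤ n → f α n < f α' n from
    fun β hβ => H β hβ
  intro β
  induction β using Ordinal.induction with
  | h β IH =>
  intro hβμ
  rcases Ordinal.zero_or_succ_or_isSuccLimit β with h0 | ⟨γ, hγ⟩ | hL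
  · exact ⟨fun _ => 0, fun α α' _ hα' _ _ _ => absurd hα' (by simp [h0])⟩
  · -- successor case
    subst hγ
    have hγβ : γ < Order.succ γ := Order.lt_succ γ
    obtain ⟨N₀, hN₀⟩ := IH γ hγβ (hγβ.trans hβμ)
    refine ⟨fun α => max (N₀ α) (thr (f α) (f γ)), ?_⟩
    intro α α' hαα' hα' n hn hn'
    rcases (Order.lt_succ_iff.mp hα').lt_or_eq with h | h
    · exact hN₀ α α' hαα' h n (le_trans (le_max_left _ _) hn) (le_trans (le_max_left _ _) hn')
    · subst h
      exact thr_spec (hinc α α' hαα' (hα'.trans hβμ)) (le_trans (le_max_right _ _) hn)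
  · -- limit case
    have hcof0 : ℵ₀ ≤ β.cof := Ordinal.aleph0_le_cof.mpr hL
    have hH : ∀ γ : Ordinal.{u}, ∃ N : Ordinal.{u} → ℕ, γ < β →
        ∀ α α', α < α' → α' < γ → ∀ n, N α ≤ n → N α' ≤ n → f α n < f α' n := by
      intro γ
      by_cases h : γ < β
      · obtain ⟨N, hN⟩ := IH γ h (h.trans hβμ)
        exact ⟨N, fun _ => hN⟩
      · exact ⟨fun _ => 0, fun h' => absurd h' h⟩
    choose NH hNH using hH
    rcases hcof0.lt_or_eq with hgt | hcofω
    · -- uncountable cofinality: better point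
      -- uncountable cofinality: use a better point
      obtain ⟨C, ⟨hC1, hC2, hC3⟩, hCb⟩ := hbetter β hβμ hgt
      have hlt1 : ∀ x y : Ordinal.{u}, x ≤ y → x < y + 1 := fun x y h => by
        rw [Ordinal.add_one_eq_succ]; exact Order.lt_succ_iff.mpr h
      have hlt1' : ∀ x y : Ordinal.{u}, x < y + 1 → x ≤ y := fun x y h => by
        rw [Ordinal.add_one_eq_succ] at h; exact Order.lt_succ_iff.mp h
      have hCb' : ∀ γ : Ordinal.{u}, ∃ m : ℕ, γ ∈ limPts C →
          ∀ ξ ∈ C ∩ Set.Iio γ, ∀ n, m ≤ n → f ξ n < f γ n := by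
        intro γ
        by_cases h : γ ∈ limPts C
        · obtain ⟨m, hm⟩ := hCb γ h; exact ⟨m, fun _ => hm⟩
        · exact ⟨0, fun h' => absurd h' h⟩
      choose m hm using hCb'
      have hlimC : ∀ γ, γ ∈ limPts C → γ < β → γ ∈ C := by
        intro γ hγ hγβ
        obtain ⟨hpos, hsup⟩ := hγ
        have hne : (C ∩ Set.Iio γ).Nonempty := by
          rcases Set.eq_empty_or_nonempty (C ∩ Set.Iio γ) with h | h
          · rw [h, csSup_empty] at hsup
            exact absurd (hsup.symm.trans Ordinal.bot_eq_zero) hpos.ne'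
          · exact h
        have := hC3 _ Set.inter_subset_left hne (by rw [hsup]; exact hγβ)
        rwa [hsup] at this
      set D : Set Ordinal.{u} := insert 0 (limPts C ∩ Set.Iio β) with hDdef
      have hD0 : (0 : Ordinal.{u}) ∈ D := Set.mem_insert _ _
      have hDβ : ∀ γ ∈ D, γ < β := by
        rintro γ (rfl | ⟨-, h⟩)
        · exact hL.pos
        · exact h
      have hDlim : ∀ γ ∈ D, γ ≠ 0 → γ ∈ limPts C := by
        rintro γ (rfl | ⟨h, -⟩) h0
        · exact absurd rfl h0
        · exact h
      have hDC : ∀ γ ∈ D, γ ≠ 0 → γ ∈ C := fun γ hγ h0 =>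
        hlimC γ (hDlim γ hγ h0) (hDβ γ hγ)
      have hM : ∀ δ γ, δ ∈ D → γ ∈ D → δ < γ → ∀ n : ℕ,
          m γ ≤ n → thr (f 0) (f γ) ≤ n → f δ n < f γ n := by
        intro δ γ hδD hγD hδγ n hn1 hn2
        have hγ0 : γ ≠ 0 := (pos_iff_ne_zero).mp (lt_of_le_of_lt (zero_le : 0 ≤ δ) hδγ)
        rcases eq_or_ne δ 0 with rfl | hδ0
        · exact thr_spec (hinc 0 γ hδγ ((hDβ γ hγD).trans hβμ)) hn2
        · exact hm γ (hDlim γ hγD hγ0) δ ⟨hDC δ hδD hδ0, hδγ⟩ n hn1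
      have hC2' : ∀ x : Ordinal.{u}, ∃ γ, x < β → γ ∈ C ∧ x ≤ γ := by
        intro x
        by_cases h : x < β
        · obtain ⟨γ, h1, h2⟩ := hC2 x h; exact ⟨γ, fun _ => ⟨h1, h2⟩⟩
        · exact ⟨0, fun h' => absurd h' h⟩
      choose c hc using hC2'
      have hDunb : ∀ δ, δ < β → ∃ γ ∈ D, δ ≤ γ := by
        intro δ hδ
        set e : ℕ → Ordinal.{u} := fun k => Nat.rec (c δ) (fun _ ek => c (ek + 1)) k with hedef
        have he : ∀ k, e k ∈ C ∧ e k < β := by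
          intro k
          induction k with
          | zero => exact ⟨(hc δ hδ).1, hC1 _ (hc δ hδ).1⟩
          | succ k ih =>
            have h1 : e k + 1 < β := by rw [Ordinal.add_one_eq_succ]; exact hL.succ_lt ih.2
            exact ⟨(hc _ h1).1, hC1 _ (hc _ h1).1⟩
        have hemono : ∀ k, e k < e (k + 1) := by
          intro k
          have h1 : e k + 1 < β := by rw [Ordinal.add_one_eq_succ]; exact hL.succ_lt (he k).2
          exact lt_of_lt_of_le (hlt1 _ _ le_rfl) (hc _ h1).2
        have hbdd : BddAbove (Set.range e) := ⟨β, by rintro x ⟨k, rfl⟩; exact (he k).2.le⟩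
        have hσβ : sSup (Set.range e) < β := by
          have h1 : iSup e < β := Ordinal.iSup_lt_ord_lift (by
            rw [Cardinal.mk_nat, Cardinal.lift_aleph0]; exact hgt) (fun k => (he k).2)
          exact h1
        have he_ltσ : ∀ k, e k < sSup (Set.range e) := fun k =>
          lt_of_lt_of_le (hemono k) (le_csSup hbdd ⟨k + 1, rfl⟩)
        have hσpos : 0 < sSup (Set.range e) :=
          lt_of_le_of_lt (zero_le) (he_ltσ 0)
        have hsupeq : sSup (C ∩ Set.Iio (sSup (Set.range e))) = sSup (Set.range e) := by
          apply le_antisymm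
          · exact csSup_le ⟨e 0, (he 0).1, he_ltσ 0⟩ (fun x hx => hx.2.le)
          · apply csSup_le (Set.range_nonempty e)
            rintro x ⟨k, rfl⟩
            exact le_csSup ⟨sSup (Set.range e), fun y hy => hy.2.le⟩ ⟨(he k).1, he_ltσ k⟩
        refine ⟨sSup (Set.range e), Set.mem_insert_of_mem _ ⟨⟨hσpos, hsupeq⟩, hσβ⟩, ?_⟩
        exact le_trans (hc δ hδ).2 (le_csSup hbdd ⟨0, rfl⟩)
      have hDcl : ∀ Y ⊆ D, Y.Nonempty → sSup Y < β → sSup Y ∈ D := by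
        intro Y hYD hYne hYβ
        by_cases h0 : sSup Y = 0
        · rw [h0]; exact hD0
        by_cases hσY : sSup Y ∈ Y
        · exact hYD hσY
        have hσpos : 0 < sSup Y := (pos_iff_ne_zero).mpr h0
        have hbddY : BddAbove Y := ⟨β, fun y hy => (hDβ y (hYD hy)).le⟩
        have hY' : (Y \ {0}).Nonempty := by
          by_contra h
          rw [Set.not_nonempty_iff_eq_empty, Set.diff_eq_empty] at h
          have h1 : sSup Y ≤ 0 := csSup_le hYne (fun y hy => le_of_eq (by simpa using h hy))
          exact h0 (le_antisymm h1 (zero_le))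
        have hbddY' : BddAbove (Y \ {0}) := ⟨β, fun y hy => (hDβ y (hYD hy.1)).le⟩
        have hsub : Y \ {0} ⊆ C ∩ Set.Iio (sSup Y) := by
          rintro y ⟨hyY, hy0⟩
          refine ⟨hDC y (hYD hyY) hy0, ?_⟩
          exact (le_csSup hbddY hyY).lt_of_ne (fun h => hσY (h ▸ hyY))
        have h1 : sSup Y ≤ sSup (Y \ {0}) := by
          apply csSup_le hYne
          intro y hy
          rcases eq_or_ne y 0 with rfl | hne
          · exact zero_le
          · exact le_csSup hbddY' ⟨hy, hne⟩
        have hsupeq : sSup (C ∩ Set.Iio (sSup Y)) = sSup Y := by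
          apply le_antisymm
          · exact csSup_le ⟨_, hsub hY'.choose_spec⟩ (fun x hx => hx.2.le)
          · exact h1.trans (csSup_le_csSup ⟨sSup Y, fun x hx => hx.2.le⟩ hY' hsub)
        exact Set.mem_insert_of_mem _ ⟨⟨hσpos, hsupeq⟩, hYβ⟩
      have hbex : ∀ α : Ordinal.{u}, ∃ bα : Ordinal.{u}, α < β →
          bα ∈ D ∧ bα ≤ α ∧ ∀ x ∈ D, x ≤ α → x ≤ bα := by
        intro α
        by_cases hα : α < β
        · refine ⟨sSup (D ∩ Set.Iio (α + 1)), fun _ => ?_⟩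
          have hne : (D ∩ Set.Iio (α + 1)).Nonempty :=
            ⟨0, hD0, lt_of_le_of_lt (zero_le) (hlt1 α α le_rfl)⟩
          have hbd : BddAbove (D ∩ Set.Iio (α + 1)) := ⟨α, fun x hx => hlt1' _ _ hx.2⟩
          have hle : sSup (D ∩ Set.Iio (α + 1)) ≤ α := csSup_le hne (fun x hx => hlt1' _ _ hx.2)
          exact ⟨hDcl _ Set.inter_subset_left hne (lt_of_le_of_lt hle hα), hle,
            fun x hx hxα => le_csSup hbd ⟨hx, hlt1 _ _ hxα⟩⟩
        · exact ⟨0, fun h => absurd h hα⟩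
      choose b hb using hbex
      have hsex : ∀ γ : Ordinal.{u}, ∃ sγ : Ordinal.{u}, γ < β →
          sγ ∈ D ∧ γ < sγ ∧ ∀ x ∈ D, γ < x → sγ ≤ x := by
        intro γ
        by_cases hγ : γ < β
        · have hγ1 : γ + 1 < β := by rw [Ordinal.add_one_eq_succ]; exact hL.succ_lt hγ
          obtain ⟨δ, hδD, hδ⟩ := hDunb (γ + 1) hγ1
          have hne : {x | x ∈ D ∧ γ < x}.Nonempty :=
            ⟨δ, hδD, lt_of_lt_of_le (hlt1 γ γ le_rfl) hδ⟩
          refine ⟨sInf {x | x ∈ D ∧ γ < x}, fun _ => ?_⟩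
          obtain ⟨h1, h2⟩ := csInf_mem hne
          exact ⟨h1, h2, fun x hx hγx => csInf_le (OrderBot.bddBelow _) ⟨hx, hγx⟩⟩
        · exact ⟨0, fun h => absurd h hγ⟩
      choose s hs using hsex
      have hαsb : ∀ α, α < β → α < s (b α) := by
        intro α hα
        by_contra h
        push_neg at h
        obtain ⟨hbD, hble, hbmax⟩ := hb α hα
        obtain ⟨hsD, hslt, -⟩ := hs (b α) (lt_of_le_of_lt hble hα)
        exact absurd (hbmax _ hsD h) (not_le.mpr hslt)
      refine ⟨fun α => max (NH (s (b α) + 1) α) (max (NH (s (b α) + 1) (b α))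
        (max (NH (s (b α) + 1) (s (b α))) (max (max (m (b α)) (thr (f 0) (f (b α))))
          (max (m (s (b α))) (thr (f 0) (f (s (b α)))))))), ?_⟩
      intro α α' hαα' hα'β n hnα hnα'
      dsimp only at hnα hnα'
      simp only [max_le_iff] at hnα hnα'
      obtain ⟨ha1, ha2, ha3, ⟨ha4, ha5⟩, ha6, ha7⟩ := hnα
      obtain ⟨hb1, hb2, hb3, ⟨hb4, hb5⟩, hb6, hb7⟩ := hnα'
      have hαβ : α < β := hαα'.trans hα'β
      have hbα := hb α hαβ
      have hbα' := hb α' hα'β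
      have hbαβ : b α < β := lt_of_le_of_lt hbα.2.1 hαβ
      have hbα'β : b α' < β := lt_of_le_of_lt hbα'.2.1 hα'β
      have hsα := hs (b α) hbαβ
      have hsα' := hs (b α') hbα'β
      have hsαβ : s (b α) < β := hDβ _ hsα.1
      have hsα'β : s (b α') < β := hDβ _ hsα'.1
      have hs1β : s (b α) + 1 < β := by rw [Ordinal.add_one_eq_succ]; exact hL.succ_lt hsαβ
      have hs1'β : s (b α') + 1 < β := by rw [Ordinal.add_one_eq_succ]; exact hL.succ_lt hsα'β
      have hbb : b α ≤ b α' := hbα'.2.2 _ hbα.1 (hbα.2.1.trans hαα'.le)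
      have h1 : f α n < f (s (b α)) n :=
        hNH _ hs1β α (s (b α)) (hαsb α hαβ) (hlt1 _ _ le_rfl) n ha1 ha3
      rcases hbb.lt_or_eq with hblt | hbeq
      · have hsle : s (b α) ≤ b α' := hsα.2.2 _ hbα'.1 hblt
        have hsleα' : s (b α) ≤ α' := hsle.trans hbα'.2.1
        rcases hsleα'.lt_or_eq with h2lt | h2eq
        · have h3 : f (s (b α)) n < f α' n := by
            rcases hsle.lt_or_eq with h4lt | h4eq
            · have h5 : f (s (b α)) n < f (b α') n :=
                hM (s (b α)) (b α') hsα.1 hbα'.1 h4lt n hb4 hb5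
              rcases hbα'.2.1.lt_or_eq with h6lt | h6eq
              · exact h5.trans (hNH _ hs1'β (b α') α' h6lt
                  (hlt1 _ _ (hαsb α' hα'β).le) n hb2 hb1)
              · rwa [h6eq] at h5
            · rw [h4eq]
              exact hNH _ hs1'β (b α') α' (h4eq ▸ h2lt)
                (hlt1 _ _ (hαsb α' hα'β).le) n hb2 hb1
          exact h1.trans h3
        · rwa [h2eq] at h1
      · exact hNH _ hs1'β α α' hαα' (hlt1 _ _ (hαsb α' hα'β).le) n
          (by rw [← hbeq]; exact ha1) hb1
    · -- countable cofinality
      -- countable cofinality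
      obtain ⟨ι, g0, hlsub, hι⟩ := Ordinal.exists_lsub_cof β
      rw [← hcofω] at hι
      haveI : Denumerable ι := (Cardinal.denumerable_iff.mpr hι).some
      set g : ℕ → Ordinal.{u} := fun k => g0 ((Denumerable.eqv ι).symm k) with hgdef
      have hg1 : ∀ k, g k < β := fun k => hlsub ▸ Ordinal.lt_lsub g0 _
      have hg2 : ∀ δ, δ < β → ∃ k, δ ≤ g k := by
        intro δ hδ
        rw [← hlsub] at hδ
        obtain ⟨i, hi⟩ := Ordinal.lt_lsub_iff.mp hδ
        exact ⟨Denumerable.eqv ι i, by simpa [hgdef] using hi⟩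
      set e : ℕ → Ordinal.{u} := fun k => Nat.rec (g 0) (fun k ek => max (ek + 1) (g (k + 1))) k
        with hedef
      have he_lt : ∀ k, e k < β := by
        intro k
        induction k with
        | zero => exact hg1 0
        | succ k ih =>
          have h1 : e k + 1 < β := by
            rw [Ordinal.add_one_eq_succ]; exact hL.succ_lt ih
          exact max_lt h1 (hg1 (k + 1))
      have hlt1 : ∀ x y : Ordinal.{u}, x ≤ y → x < y + 1 := fun x y h => by
        rw [Ordinal.add_one_eq_succ]; exact Order.lt_succ_iff.mpr h
      have he_mono : ∀ k, e k < e (k + 1) := by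
        intro k
        have h2 : e k + 1 ≤ e (k + 1) := le_max_left _ _
        exact lt_of_lt_of_le (hlt1 _ _ le_rfl) h2
      have hge : ∀ k, g k ≤ e k := by
        intro k
        cases k with
        | zero => exact le_rfl
        | succ k => exact le_max_right _ _
      have hex : ∀ α, α < β → ∃ k, α < e k := by
        intro α hα
        obtain ⟨k, hk⟩ := hg2 α hα
        exact ⟨k + 1, lt_of_le_of_lt (hk.trans (hge k)) (he_mono k)⟩
      set kk : Ordinal.{u} → ℕ := fun α => sInf {k | α < e k} with hkkdef
      have hkk1 : ∀ α, α < β → α < e (kk α) := fun α hα => Nat.sInf_mem (hex α hα)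
      have hkkle : ∀ α j, α < e j → kk α ≤ j := fun α j h => Nat.sInf_le h
      have hkkmin : ∀ α j, j < kk α → e j ≤ α := fun α j hj =>
        le_of_not_gt (Nat.notMem_of_lt_sInf hj)
      have hek1β : ∀ k, e k + 1 < β := by
        intro k; rw [Ordinal.add_one_eq_succ]; exact hL.succ_lt (he_lt k)
      refine ⟨fun α => max (NH (e (kk α) + 1) α)
        ((Finset.range (kk α + 1)).sup fun j => NH (e (kk α) + 1) (e j)), ?_⟩
      intro α α' hαα' hα'β n hnα hnα'
      dsimp only at hnα hnα'
      have hαβ : α < β := hαα'.trans hα'β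
      have hNHα : NH (e (kk α) + 1) α ≤ n := le_trans (le_max_left _ _) hnα
      have hNHα' : NH (e (kk α') + 1) α' ≤ n := le_trans (le_max_left _ _) hnα'
      have hsupα : ∀ j ≤ kk α, NH (e (kk α) + 1) (e j) ≤ n := by
        intro j hj
        exact le_trans (le_trans (Finset.le_sup (f := fun j => NH (e (kk α) + 1) (e j))
          (Finset.mem_range.mpr (Nat.lt_succ_of_le hj))) (le_max_right _ _)) hnα
      have hsupα' : ∀ j ≤ kk α', NH (e (kk α') + 1) (e j) ≤ n := by
        intro j hj
        exact le_trans (le_trans (Finset.le_sup (f := fun j => NH (e (kk α') + 1) (e j))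
          (Finset.mem_range.mpr (Nat.lt_succ_of_le hj))) (le_max_right _ _)) hnα'
      have hkk' : kk α ≤ kk α' := hkkle α _ (hαα'.trans (hkk1 α' hα'β))
      rcases hkk'.lt_or_eq with hklt | hkeq
      · -- kk α < kk α'
        have h1 : f α n < f (e (kk α)) n :=
          hNH (e (kk α) + 1) (hek1β _) α (e (kk α)) (hkk1 α hαβ)
            (hlt1 _ _ le_rfl)
            n hNHα (hsupα (kk α) le_rfl)
        have h2 : e (kk α) ≤ α' := hkkmin α' _ hklt
        rcases h2.lt_or_eq with h2lt | h2eq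
        · have h3 : f (e (kk α)) n < f α' n :=
            hNH (e (kk α') + 1) (hek1β _) (e (kk α)) α' h2lt
              (hlt1 _ _ (hkk1 α' hα'β).le)
              n (hsupα' (kk α) hklt.le) hNHα'
          exact h1.trans h3
        · rwa [h2eq] at h1
      · -- kk α = kk α'
        have := hNH (e (kk α) + 1) (hek1β _) α α' hαα'
          (by rw [hkeq]; exact hlt1 _ _ (hkk1 α' hα'β).le)
          n hNHα (by rw [hkeq]; exact hNHα')
        exact this
end
end

section
/- Let κ be a singular cardinal of cofinality ω, let (f_α)_{α<μ} be a scale in ∏_n κ_n with μ > κ regular, and let β < μ be a limit ordinal with ω < cf(β) < κ. Then β is a good point of the scale if and only if there exists an exact upper bound h for (f_α)_{α<β} such that cf(h(n)) = cf(β) for all n < ω. -/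
open Cardinal Set

universe u v

noncomputable section

/-- `h` is an exact upper bound for the restriction of `f` to the ordinals below `β`:
`f α <* h` for all `α < β`, and every `g <* h` satisfies `g <* f α` for some `α < β`. -/
def IsEub (f : Ordinal.{u} → ℕ → Ordinal.{u}) (β : Ordinal.{u}) (h : ℕ → Ordinal.{u}) :
    Prop :=
  (∀ α < β, EvLT (f α) h) ∧
  ∀ g : ℕ → Ordinal.{u}, EvLT g h → ∃ α < β, EvLT g (f α)

theorem evLT_iff {f g : ℕ → Ordinal.{u}} :
    EvLT f g ↔ ∃ m : ℕ, ∀ n, m ≤ n → f n < g n := by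
  constructor
  · intro h
    rcases h.bddAbove with ⟨m, hm⟩
    exact ⟨m + 1, fun n hn => by
      by_contra hc
      exact absurd (hm hc) (by omega)⟩
  · rintro ⟨m, hm⟩
    exact Set.Finite.subset (Set.finite_Iio m) (fun n hn => by
      simp only [Set.mem_setOf_eq] at hn
      by_contra hc
      exact hn (hm n (by simpa using hc)))

/-- Pigeonhole: a `ℕ`-valued function on an ordinal of uncountable cofinality
is constant on an unbounded set. -/
theorem exists_unbounded_fiber {o : Ordinal.{u}} (ho : ℵ₀ < o.cof)
    (g : Ordinal.{u} → ℕ) :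
    ∃ m : ℕ, ∀ γ < o, ∃ ξ, γ ≤ ξ ∧ ξ < o ∧ g ξ = m := by
  by_contra hc
  push_neg at hc
  choose γ hγo hbad using hc
  have hs : (⨆ m : ℕ, γ m) < o := by
    apply Ordinal.iSup_lt_ord_lift _ hγo
    simpa using ho
  exact hbad (g (⨆ m : ℕ, γ m)) (⨆ m : ℕ, γ m)
    (le_ciSup Ordinal.bddAbove_of_small _) hs rfl

theorem cof_blsub_of_strictMono {o : Ordinal.{u}} (ho : o.cof.ord = o) (holim : Order.IsSuccLimit o)
    {g : ∀ i < o, Ordinal.{u}} (hg : ∀ {i j} (hi hj), i < j → g i hi < g j hj) :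
    (Ordinal.blsub.{u, u} o g).cof.ord = o := by
  set b := Ordinal.blsub.{u, u} o g with hb
  refine Ordinal.IsFundamentalSequence.cof_eq ⟨?_, hg, rfl⟩
  obtain ⟨s, hs⟩ := Ordinal.exists_fundamental_sequence b
  have hch : ∀ p (hp : p < b.cof.ord), ∃ i, ∃ hi : i < o, s p hp ≤ g i hi := fun p hp =>
    Ordinal.lt_blsub_iff.1 (hs.lt hp)
  set φ : ∀ p < b.cof.ord, Ordinal.{u} := fun p hp => Order.succ (hch p hp).choose with hφ
  have hblsub : Ordinal.blsub.{u, u} b.cof.ord φ = o := by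
    apply le_antisymm
    · rw [Ordinal.blsub_le_iff]
      intro p hp
      exact holim.succ_lt (hch p hp).choose_spec.choose
    · refine le_of_forall_lt fun i hi => ?_
      have : g i hi < b := Ordinal.lt_blsub _ _ _
      rw [hs.blsub_eq.symm] at this
      obtain ⟨p, hp, hple⟩ := Ordinal.lt_blsub_iff.1 this
      have h2 : s p hp ≤ g _ (hch p hp).choose_spec.choose := (hch p hp).choose_spec.choose_spec
      have hile : i ≤ (hch p hp).choose := by
        by_contra hcon
        push_neg at hcon
        exact absurd (hple.trans h2) (not_le.2 (hg _ _ hcon))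
      calc i < φ p hp := Order.lt_succ_iff.2 hile
        _ < Ordinal.blsub.{u, u} b.cof.ord φ := Ordinal.lt_blsub _ _ _
  have h1 : o.cof ≤ b.cof.ord.card := hblsub ▸ Ordinal.cof_blsub_le φ
  calc o = o.cof.ord := ho.symm
    _ ≤ b.cof.ord.card.ord := Cardinal.ord_le_ord.2 h1
    _ ≤ b.cof.ord := Cardinal.ord_card_le _


theorem exists_ordRec {X : Type (u+1)} (F : ∀ ξ : Ordinal.{u}, (∀ η, η < ξ → X) → X) :
    ∃ a : Ordinal.{u} → X, ∀ ξ, a ξ = F ξ (fun η _ => a η) :=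
  ⟨Ordinal.lt_wf.fix F, fun ξ => Ordinal.lt_wf.fix_eq F ξ⟩

theorem goodPt_forward {μord β : Ordinal.{u}} (f : Ordinal.{u} → ℕ → Ordinal.{u})
    (hinc : ∀ α γ, α < γ → γ < μord → EvLT (f α) (f γ))
    (hβ : β < μord) (hβlim : Order.IsSuccLimit β) (hβ1 : ℵ₀ < β.cof) :
    IsGoodPt f β → ∃ h : ℕ → Ordinal.{u}, IsEub f β h ∧ ∀ n, (h n).cof = β.cof := by
  rintro ⟨A, hA1, hA2, m, hmon⟩
  have hlreg : β.cof.IsRegular := Cardinal.isRegular_cof hβlim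
  set lo := β.cof.ord with hlo
  have hlolim : Order.IsSuccLimit lo := Cardinal.isSuccLimit_ord hlreg.1
  have hcoflo : lo.cof.ord = lo := by rw [hlo, hlreg.cof_eq]
  obtain ⟨e, he⟩ := Ordinal.exists_fundamental_sequence β
  -- totalized fundamental sequence
  obtain ⟨e', he'def, he'lt⟩ : ∃ e'' : Ordinal.{u} → Ordinal.{u},
      (∀ i (hi : i < lo), e'' i = e i hi) ∧ (∀ i, i < lo → e'' i < β) := by
    refine ⟨fun i => if h : i < lo then e i h else 0, fun i hi => dif_pos hi, ?_⟩
    intro i hi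
    show (if h : i < lo then e i h else 0) < β
    rw [dif_pos hi, ← he.blsub_eq]
    exact Ordinal.lt_blsub _ _ _
  -- choice function into A
  have hpick : ∀ x, ∃ y, x < β → (y ∈ A ∧ x ≤ y) := by
    intro x
    by_cases hx : x < β
    · obtain ⟨y, hy1, hy2⟩ := hA2 x hx
      exact ⟨y, fun _ => ⟨hy1, hy2⟩⟩
    · exact ⟨0, fun h => absurd h hx⟩
  choose pick hpickspec using hpick
  -- the recursion
  obtain ⟨a, ha⟩ := exists_ordRec.{u}
    (fun ξ prev => pick (max (e' ξ) (Order.succ (Ordinal.bsup.{u, u} ξ prev))))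
  have key : ∀ ξ, ξ < lo → a ξ ∈ A ∧ e' ξ ≤ a ξ ∧ ∀ η, η < ξ → a η < a ξ := by
    intro ξ
    induction ξ using Ordinal.induction with
    | h ξ IH =>
      intro hξ
      have hbsup : Ordinal.bsup.{u, u} ξ (fun η _ => a η) < β := by
        apply Ordinal.bsup_lt_ord
        · rw [Cardinal.lt_ord] at hξ; exact hξ
        · intro η hη
          exact hA1 _ (IH η hη (hη.trans hξ)).1
      have hx : max (e' ξ) (Order.succ (Ordinal.bsup.{u, u} ξ (fun η _ => a η))) < β :=
        max_lt (he'lt ξ hξ) (hβlim.succ_lt hbsup)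
      have hspec := hpickspec _ hx
      rw [ha ξ] at *
      refine ⟨hspec.1, le_trans (le_max_left _ _) hspec.2, fun η hη => ?_⟩
      calc a η ≤ Ordinal.bsup.{u, u} ξ (fun η _ => a η) := Ordinal.le_bsup _ _ hη
        _ < Order.succ _ := Order.lt_succ _
        _ ≤ max (e' ξ) _ := le_max_right _ _
        _ ≤ _ := hspec.2
  have haA : ∀ i, i < lo → a i ∈ A := fun i hi => (key i hi).1
  have haβ : ∀ i, i < lo → a i < β := fun i hi => hA1 _ (haA i hi)
  have hamono : ∀ i j (_ : i < j), j < lo → a i < a j := fun i j hij hj =>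
    (key j hj).2.2 i hij
  -- the eub
  set h : ℕ → Ordinal.{u} := fun k =>
    Ordinal.blsub.{u, u} lo (fun i _ => f (a i) (max k m)) with hh
  have hstrict : ∀ k, ∀ {i j : Ordinal} (hi : i < lo) (hj : j < lo), i < j →
      f (a i) (max k m) < f (a j) (max k m) := by
    intro k i j hi hj hij
    exact hmon (max k m) (le_max_right _ _) (haA i hi) (haA j hj) (hamono i j hij hj)
  -- cofinalities
  have hcof : ∀ k, (h k).cof = β.cof := by
    intro k
    have h2 := cof_blsub_of_strictMono hcoflo hlolim (g := fun i _ => f (a i) (max k m))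
      (fun hi hj hij => hstrict k hi hj hij)
    exact Cardinal.ord_injective (h2.trans hlo)
  -- a is cofinal in β
  have hacof : ∀ α < β, ∃ i, i < lo ∧ α < a i := by
    intro α hα
    rw [← he.blsub_eq] at hα
    obtain ⟨i, hi, hle⟩ := Ordinal.lt_blsub_iff.1 hα
    refine ⟨Order.succ i, hlolim.succ_lt hi, ?_⟩
    calc α ≤ e i hi := hle
      _ = e' i := (he'def i hi).symm
      _ ≤ a i := (key i hi).2.1
      _ < a (Order.succ i) := hamono _ _ (Order.lt_succ i) (hlolim.succ_lt hi)
  refine ⟨h, ⟨?_, ?_⟩, hcof⟩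
  · -- upper bound
    intro α hα
    obtain ⟨i, hi, hαi⟩ := hacof α hα
    obtain ⟨m', hm'⟩ := evLT_iff.1 (hinc α (a i) hαi ((haβ i hi).trans hβ))
    rw [evLT_iff]
    refine ⟨max m' m, fun k hk => ?_⟩
    have hkm : max k m = k := max_eq_left (le_trans (le_max_right _ _) hk)
    calc f α k < f (a i) k := hm' k (le_trans (le_max_left _ _) hk)
      _ = f (a i) (max k m) := by rw [hkm]
      _ < h k := Ordinal.lt_blsub _ _ hi
  · -- exactness
    intro g hg
    obtain ⟨m', hm'⟩ := evLT_iff.1 hg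
    have hik : ∀ k, ∃ i, i < lo ∧ (max m' m ≤ k → g k ≤ f (a i) (max k m)) := by
      intro k
      by_cases hk : max m' m ≤ k
      · have : g k < h k := hm' k (le_trans (le_max_left _ _) hk)
        obtain ⟨i, hi, hle⟩ := Ordinal.lt_blsub_iff.1 this
        exact ⟨i, hi, fun _ => hle⟩
      · exact ⟨0, hlolim.pos, fun h => absurd h hk⟩
    choose ik hik1 hik2 using hik
    have hsup : (⨆ k, ik k) < lo := by
      apply Ordinal.iSup_lt_ord_lift _ hik1
      rw [hlo, hlreg.cof_eq]
      simpa using hβ1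
    set i' := Order.succ (⨆ k, ik k) with hi'
    have hi'lo : i' < lo := hlolim.succ_lt hsup
    refine ⟨a i', haβ _ hi'lo, evLT_iff.2 ⟨max m' m, fun k hk => ?_⟩⟩
    have hkm : max k m = k := max_eq_left (le_trans (le_max_right _ _) hk)
    calc g k ≤ f (a (ik k)) (max k m) := hik2 k hk
      _ < f (a i') (max k m) := hstrict k (hik1 k) hi'lo
          (lt_of_le_of_lt (le_ciSup Ordinal.bddAbove_of_small k) (Order.lt_succ _))
      _ = f (a i') k := by rw [hkm]

theorem goodPt_backward {μord β : Ordinal.{u}} (f : Ordinal.{u} → ℕ → Ordinal.{u})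
    (hinc : ∀ α γ, α < γ → γ < μord → EvLT (f α) (f γ))
    (hβ : β < μord) (hβlim : Order.IsSuccLimit β) (hβ1 : ℵ₀ < β.cof)
    (h : ℕ → Ordinal.{u}) (heub : IsEub f β h) (hcofh : ∀ n, (h n).cof = β.cof) :
    IsGoodPt f β := by
  have hlreg : β.cof.IsRegular := Cardinal.isRegular_cof hβlim
  set lo := β.cof.ord with hlo
  have hlolim : Order.IsSuccLimit lo := Cardinal.isSuccLimit_ord hlreg.1
  have hcoflo : lo.cof = β.cof := by rw [hlo, hlreg.cof_eq]
  have haleph : Cardinal.lift.{u, 0} #ℕ < lo.cof := by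
    rw [hcoflo]; simpa using hβ1
  -- cofinal sequences in each h n
  have hHn : ∀ n : ℕ, ∃ H' : Ordinal.{u} → Ordinal.{u},
      (∀ j, j < lo → H' j < h n) ∧ (∀ j j', j < j' → j' < lo → H' j < H' j') ∧
      (∀ x, x < h n → ∃ j, j < lo ∧ x ≤ H' j) := by
    intro n
    obtain ⟨s, hs⟩ := Ordinal.exists_fundamental_sequence (h n)
    have hl : (h n).cof.ord = lo := by rw [hcofh n, hlo]
    refine ⟨fun j => if hj : j < (h n).cof.ord then s j hj else 0, ?_, ?_, ?_⟩
    · intro j hj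
      show (if hj : j < (h n).cof.ord then s j hj else 0) < h n
      rw [dif_pos (hl ▸ hj : j < (h n).cof.ord)]
      exact hs.lt _
    · intro j j' hjj' hj'
      have hj'2 : j' < (h n).cof.ord := hl ▸ hj'
      have hj2 : j < (h n).cof.ord := hjj'.trans hj'2
      show (if hj : j < (h n).cof.ord then s j hj else 0) <
        (if hj : j' < (h n).cof.ord then s j' hj else 0)
      rw [dif_pos hj2, dif_pos hj'2]
      exact hs.strict_mono _ _ hjj'
    · intro x hx
      rw [← hs.blsub_eq] at hx
      obtain ⟨j, hj, hle⟩ := Ordinal.lt_blsub_iff.1 hx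
      refine ⟨j, hl ▸ hj, ?_⟩
      show x ≤ (if hj : j < (h n).cof.ord then s j hj else 0)
      rw [dif_pos hj]; exact hle
  choose H hH1 hH2 hH3 using hHn
  -- G: index beyond which H dominates f α
  have hG : ∀ α : Ordinal.{u}, ∃ g' : Ordinal.{u}, α < β →
      g' < lo ∧ ∃ ma : ℕ, ∀ j', g' ≤ j' → j' < lo → ∀ n, ma ≤ n → f α n < H n j' := by
    intro α
    by_cases hα : α < β
    · obtain ⟨ma, hma⟩ := evLT_iff.1 (heub.1 α hα)
      have hjn : ∀ n : ℕ, ∃ j, j < lo ∧ (ma ≤ n → f α n ≤ H n j) := by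
        intro n
        by_cases hn : ma ≤ n
        · obtain ⟨j, hj, hle⟩ := hH3 n _ (hma n hn)
          exact ⟨j, hj, fun _ => hle⟩
        · exact ⟨0, hlolim.pos, fun hc => absurd hc hn⟩
      choose jn hjn1 hjn2 using hjn
      have hsup : (⨆ n, jn n) < lo := Ordinal.iSup_lt_ord_lift haleph hjn1
      refine ⟨Order.succ (⨆ n, jn n), fun _ => ⟨hlolim.succ_lt hsup, ma, ?_⟩⟩
      intro j' hj'1 hj'2 n hn
      calc f α n ≤ H n (jn n) := hjn2 n hn
        _ < H n j' := hH2 n _ _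
            (lt_of_le_of_lt (le_ciSup Ordinal.bddAbove_of_small n)
              (lt_of_lt_of_le (Order.lt_succ _) hj'1)) hj'2
    · exact ⟨0, fun hc => absurd hc hα⟩
  choose G hGspec using hG
  -- F: ordinal whose f-value dominates column j of H
  have hF : ∀ j : Ordinal.{u}, ∃ α : Ordinal.{u}, j < lo →
      α < β ∧ ∃ mf : ℕ, ∀ n, mf ≤ n → H n j < f α n := by
    intro j
    by_cases hj : j < lo
    · have : EvLT (fun n => H n j) h := by
        rw [evLT_iff]
        exact ⟨0, fun n _ => hH1 n j hj⟩
      obtain ⟨α, hα, hev⟩ := heub.2 _ this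
      obtain ⟨mf, hmf⟩ := evLT_iff.1 hev
      exact ⟨α, fun _ => ⟨hα, mf, hmf⟩⟩
    · exact ⟨0, fun hc => absurd hc hj⟩
  choose F hFspec using hF
  -- totalized fundamental sequence for β
  obtain ⟨e, he⟩ := Ordinal.exists_fundamental_sequence β
  obtain ⟨e', he'lt, he'cof⟩ : ∃ e'' : Ordinal.{u} → Ordinal.{u},
      (∀ i, i < lo → e'' i < β) ∧ (∀ γ, γ < β → ∃ i, i < lo ∧ γ ≤ e'' i) := by
    refine ⟨fun i => if h : i < β.cof.ord then e i h else 0, ?_, ?_⟩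
    · intro i hi
      show (if h : i < β.cof.ord then e i h else 0) < β
      rw [dif_pos (hlo ▸ hi : i < β.cof.ord)]
      exact he.lt _
    · intro γ hγ
      rw [← he.blsub_eq] at hγ
      obtain ⟨i, hi, hle⟩ := Ordinal.lt_blsub_iff.1 hγ
      refine ⟨i, hlo ▸ hi, ?_⟩
      show γ ≤ (if h : i < β.cof.ord then e i h else 0)
      rw [dif_pos hi]; exact hle
  -- the main recursion: a ξ = (α_ξ, i_ξ)
  obtain ⟨a, ha⟩ := exists_ordRec.{u} (X := Ordinal.{u} × Ordinal.{u})
    (fun ξ prev =>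
      (max (max (Order.succ (Ordinal.bsup.{u, u} ξ (fun η hη => (prev η hη).1)))
        (Order.succ (F (Order.succ (Ordinal.bsup.{u, u} ξ
          (fun η hη => max (prev η hη).2 (G (prev η hη).1)))))))
        (e' ξ),
       Order.succ (Ordinal.bsup.{u, u} ξ (fun η hη => max (prev η hη).2 (G (prev η hη).1)))))
  have key : ∀ ξ, ξ < lo → (a ξ).1 < β ∧ (a ξ).2 < lo ∧ e' ξ ≤ (a ξ).1 ∧
      F ((a ξ).2) < (a ξ).1 ∧
      ∀ η, η < ξ → (a η).1 < (a ξ).1 ∧ (a η).2 < (a ξ).2 ∧ G ((a η).1) < (a ξ).2 := by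
    intro ξ
    induction ξ using Ordinal.induction with
    | h ξ IH =>
      intro hξ
      have hcard : ξ.card < β.cof := Cardinal.lt_ord.1 (hlo ▸ hξ)
      have hbsup2 : Ordinal.bsup.{u, u} ξ (fun η hη => max (a η).2 (G ((a η).1))) < lo := by
        apply Ordinal.bsup_lt_ord (by rwa [hcoflo])
        intro η hη
        obtain ⟨h1, h2, _⟩ := IH η hη (hη.trans hξ)
        exact max_lt h2 (hGspec _ h1).1
      set i : Ordinal.{u} :=
        Order.succ (Ordinal.bsup.{u, u} ξ (fun η hη => max (a η).2 (G ((a η).1)))) with hidef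
      have hilo : i < lo := hlolim.succ_lt hbsup2
      have hbsup1 : Ordinal.bsup.{u, u} ξ (fun η hη => (a η).1) < β := by
        apply Ordinal.bsup_lt_ord hcard
        intro η hη
        exact (IH η hη (hη.trans hξ)).1
      have hFi : F i < β := (hFspec i hilo).1
      have haeq : a ξ =
          (max (max (Order.succ (Ordinal.bsup.{u, u} ξ (fun η hη => (a η).1)))
            (Order.succ (F i))) (e' ξ), i) := ha ξ
      have h1 : (a ξ).1 < β := by
        rw [haeq]
        exact max_lt (max_lt (hβlim.succ_lt hbsup1) (hβlim.succ_lt hFi)) (he'lt ξ hξ)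
      refine ⟨h1, by rw [haeq]; exact hilo, ?_, ?_, ?_⟩
      · rw [haeq]; exact le_max_right _ _
      · rw [haeq]
        exact lt_of_lt_of_le (Order.lt_succ _) (le_trans (le_max_right _ _) (le_max_left _ _))
      · intro η hη
        obtain ⟨g1, g2, _⟩ := IH η hη (hη.trans hξ)
        refine ⟨?_, ?_, ?_⟩
        · rw [haeq]
          calc (a η).1 ≤ Ordinal.bsup.{u, u} ξ (fun η hη => (a η).1) :=
                Ordinal.le_bsup _ _ hη
            _ < Order.succ _ := Order.lt_succ _
            _ ≤ _ := le_trans (le_max_left _ _) (le_max_left _ _)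
        · rw [haeq]
          calc (a η).2 ≤ max (a η).2 (G ((a η).1)) := le_max_left _ _
            _ ≤ Ordinal.bsup.{u, u} ξ _ := Ordinal.le_bsup _ _ hη
            _ < i := Order.lt_succ _
        · rw [haeq]
          calc G ((a η).1) ≤ max (a η).2 (G ((a η).1)) := le_max_right _ _
            _ ≤ Ordinal.bsup.{u, u} ξ _ := Ordinal.le_bsup _ _ hη
            _ < i := Order.lt_succ _
  -- thresholds
  have hm : ∀ ξ : Ordinal.{u}, ∃ mm : ℕ, ξ < lo → ∀ n, mm ≤ n →
      f ((a ξ).1) n < H n ((a (Order.succ ξ)).2) ∧ H n ((a ξ).2) < f ((a ξ).1) n := by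
    intro ξ
    by_cases hξ : ξ < lo
    · have hsξ : Order.succ ξ < lo := hlolim.succ_lt hξ
      obtain ⟨h1, h2, _, h4, _⟩ := key ξ hξ
      obtain ⟨_, _, _, _, hcross⟩ := key _ hsξ
      obtain ⟨hc1, hc2, hc3⟩ := hcross ξ (Order.lt_succ ξ)
      -- (A): f (a ξ).1 dominated by column (a (succ ξ)).2
      obtain ⟨hGlt, ma, hma⟩ := hGspec _ h1
      -- (B): column (a ξ).2 dominated by f (F (a ξ).2) dominated by f (a ξ).1
      obtain ⟨hFβ, mf, hmf⟩ := hFspec _ h2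
      obtain ⟨mi, hmi⟩ := evLT_iff.1 (hinc _ _ h4 (h1.trans hβ))
      refine ⟨max ma (max mf mi), fun _ => fun n hn => ⟨?_, ?_⟩⟩
      · exact hma _ hc3.le (key _ hsξ).2.1 n (le_trans (le_max_left _ _) hn)
      · calc H n ((a ξ).2) < f (F ((a ξ).2)) n :=
              hmf n (le_trans (le_trans (le_max_left _ _) (le_max_right _ _)) hn)
          _ < f ((a ξ).1) n :=
              hmi n (le_trans (le_trans (le_max_right _ _) (le_max_right _ _)) hn)
    · exact ⟨0, fun hc => absurd hc hξ⟩
  choose mfun hmfun using hm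
  -- pigeonhole
  obtain ⟨m, hmE⟩ := exists_unbounded_fiber (o := lo) (by rwa [hcoflo]) mfun
  refine ⟨(fun ξ => (a ξ).1) '' {ξ | ξ < lo ∧ mfun ξ = m}, ?_, ?_, m, ?_⟩
  · rintro x ⟨ξ, ⟨hξ, _⟩, rfl⟩
    exact (key ξ hξ).1
  · intro γ hγ
    obtain ⟨i, hi, hle⟩ := he'cof γ hγ
    obtain ⟨ξ, hiξ, hξlo, hmξ⟩ := hmE i hi
    refine ⟨(a ξ).1, ⟨ξ, ⟨hξlo, hmξ⟩, rfl⟩, ?_⟩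
    rcases eq_or_lt_of_le hiξ with heq | hiξ'
    · exact le_trans hle (heq ▸ (key ξ hξlo).2.2.1)
    · exact le_trans hle (le_trans (key i hi).2.2.1
        ((key ξ hξlo).2.2.2.2 i hiξ').1.le)
  · intro n hn
    rintro x ⟨ξ, ⟨hξ, hmξ⟩, rfl⟩ y ⟨ζ, ⟨hζ, hmζ⟩, rfl⟩ hxy
    have hξζ : ξ < ζ := by
      rcases lt_trichotomy ξ ζ with h' | rfl | h'
      · exact h'
      · exact absurd hxy (lt_irrefl _)
      · exact absurd ((key ξ hξ).2.2.2.2 ζ h').1 (asymm hxy)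
    have hsξ : Order.succ ξ < lo := hlolim.succ_lt hξ
    have hstep1 : f ((a ξ).1) n < H n ((a (Order.succ ξ)).2) :=
      ((hmfun ξ hξ n (hmξ ▸ hn)).1)
    have hstep3 : H n ((a ζ).2) < f ((a ζ).1) n := (hmfun ζ hζ n (hmζ ▸ hn)).2
    have hstep2 : H n ((a (Order.succ ξ)).2) ≤ H n ((a ζ).2) := by
      rcases eq_or_lt_of_le (Order.succ_le_of_lt hξζ) with heq | hlt
      · rw [heq]
      · exact (hH2 n _ _ ((key ζ hζ).2.2.2.2 _ hlt).2.1 (key ζ hζ).2.1).le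
    exact hstep1.trans_le (hstep2.trans hstep3.le)

/-- For a scale of length `μ > κ` (`μ` regular) in `∏ n, κn n` and a limit ordinal
`β < μ` with `ω < cf β < κ`: `β` is good iff there is an exact upper bound `h` for the
scale below `β` with `cf (h n) = cf β` for all `n`. -/
theorem goodPt_iff_exists_eub (κ : Cardinal.{u})
    (hκ : ℵ₀ < κ) (hcof : κ.ord.cof = ℵ₀)
    (κn : ℕ → Cardinal.{u}) (hreg : ∀ n, (κn n).IsRegular) (hmono : StrictMono κn)
    (hlt : ∀ n, κn n < κ) (hcofinal : ∀ c < κ, ∃ n, c ≤ κn n)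
    (μ : Cardinal.{u}) (hμreg : μ.IsRegular) (hκμ : κ < μ)
    (f : Ordinal.{u} → ℕ → Ordinal.{u}) (hscale : IsScale κn μ.ord f)
    (β : Ordinal.{u}) (hβ : β < μ.ord) (hβlim : Order.IsSuccLimit β)
    (hβ1 : ℵ₀ < β.cof) (hβ2 : β.cof < κ) :
    IsGoodPt f β ↔
      ∃ h : ℕ → Ordinal.{u}, IsEub f β h ∧ ∀ n, (h n).cof = β.cof := by
  constructor
  · exact goodPt_forward f hscale.2.1 hβ hβlim hβ1
  · rintro ⟨h, heub, hcofs⟩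
    exact goodPt_backward f hscale.2.1 hβ hβlim hβ1 h heub hcofs
end
end
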